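/- arXiv:1509.03228 — 5 statements merged into one kernel-verified Lean document; each statement's English description precedes it below -/
import Mathlib

section
/- Let k be a commutative ring and let K be a simplicial complex on the vertex set {1,…,m} that is pure of rank n. Then the restriction homomorphism α : k[x_1,…,x_m] → PP[K̂;k], which sends a polynomial h to the family (h|_σ)_{σ∈K}, is a surjective k-algebra homomorphism whose kernel is exactly the Stanley–Reisner ideal I_K; consequently α induces an isomorphism of k-algebras k[K] = k[x_1,…,x_m]/I_K ≅ PP[K̂;k]. -/
noncomputable section

open MvPolynomial

/-- Restriction of a polynomial to a face `σ`: substitute `x i = 0` for every `i ∉ σ`. -/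
def restrictFace (k : Type*) [CommRing k] {m : ℕ} (σ : Finset (Fin m)) :
    MvPolynomial (Fin m) k →ₐ[k] MvPolynomial (Fin m) k :=
  aeval (fun i => if i ∈ σ then X i else 0)

/-- `K` is a simplicial complex on the vertex set `{1, …, m}`:
it contains the empty set and is closed under taking subsets. -/
def IsSimplicialComplex {m : ℕ} (K : Set (Finset (Fin m))) : Prop :=
  ∅ ∈ K ∧ ∀ σ ∈ K, ∀ τ, τ ⊆ σ → τ ∈ K

/-- `K` is pure of rank `n`: every face is contained in a face of cardinality `n`. -/
def IsPureOfRank {m : ℕ} (K : Set (Finset (Fin m))) (n : ℕ) : Prop :=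
  ∀ σ ∈ K, ∃ τ ∈ K, σ ⊆ τ ∧ τ.card = n

/-- The Stanley–Reisner ideal of `K`: generated by the squarefree monomials
`∏_{i ∈ S} x i` over the non-faces `S ∉ K`. -/
def stanleyReisnerIdeal (k : Type*) [CommRing k] {m : ℕ} (K : Set (Finset (Fin m))) :
    Ideal (MvPolynomial (Fin m) k) :=
  Ideal.span {p | ∃ S : Finset (Fin m), S ∉ K ∧ p = ∏ i ∈ S, X i}

/-- The algebra `PP[K̂;k]` of piecewise polynomials on the pulled-back fan `K̂`:
families `g = (g_σ)_{σ ∈ K}` with `g σ` supported on the variables of `σ` and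
`g τ = (g σ)|_τ` whenever `τ ⊆ σ` in `K`; operations are componentwise. -/
def PPhat (k : Type*) [CommRing k] {m : ℕ} (K : Set (Finset (Fin m))) :
    Subalgebra k ((σ : K) → MvPolynomial (Fin m) k) :=
  (⨅ σ : K, (MvPolynomial.supported k (((σ : Finset (Fin m)) : Set (Fin m)))).comap
      (Pi.evalAlgHom k (fun _ : K => MvPolynomial (Fin m) k) σ)) ⊓
  ⨅ (σ : K) (τ : K) (_ : (τ : Finset (Fin m)) ⊆ (σ : Finset (Fin m))),
    AlgHom.equalizer (Pi.evalAlgHom k (fun _ : K => MvPolynomial (Fin m) k) τ)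
      ((restrictFace k (τ : Finset (Fin m))).comp
        (Pi.evalAlgHom k (fun _ : K => MvPolynomial (Fin m) k) σ))

/-- The restriction homomorphism `α : k[x_1,…,x_m] → ∏_{σ ∈ K} k[x_1,…,x_m]`,
sending `h` to the family `(h|_σ)_{σ ∈ K}`. -/
def alphaMap (k : Type*) [CommRing k] {m : ℕ} (K : Set (Finset (Fin m))) :
    MvPolynomial (Fin m) k →ₐ[k] ((σ : K) → MvPolynomial (Fin m) k) :=
  Pi.algHom _ _ (fun σ : K => restrictFace k (σ : Finset (Fin m)))

/-! The restriction `h ↦ h|_σ` keeps exactly the monomials `x^a` with `supp a ⊆ σ`, so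
everything is read off coefficients. Since `K` is closed under subsets, `h` lies in the kernel
iff its coefficient at every `a` with `supp a ∈ K` vanishes, and this is also the membership
criterion for the monomial ideal `I_K`. A compatible family `g` is the image of the polynomial
whose coefficient at `a` is that of `g_{supp a}` (and zero when `supp a ∉ K`). -/

section restrictFace

variable {k : Type*} [CommRing k] {m : ℕ}

theorem restrictFace_monomial (σ : Finset (Fin m)) (a : Fin m →₀ ℕ) (c : k) :
    restrictFace k σ (monomial a c) = if a.support ⊆ σ then monomial a c else 0 := by
  rw [restrictFace, aeval_monomial]
  split_ifs with ha
  · rw [monomial_eq]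
    congr 1
    exact Finset.prod_congr rfl fun i hi => by simp [ha hi]
  · obtain ⟨i, hia, hiσ⟩ := Finset.not_subset.mp ha
    refine mul_eq_zero_of_right _ (Finset.prod_eq_zero hia ?_)
    simp [hiσ, Finsupp.mem_support_iff.mp hia]

theorem coeff_restrictFace (σ : Finset (Fin m)) (p : MvPolynomial (Fin m) k)
    (a : Fin m →₀ ℕ) :
    coeff a (restrictFace k σ p) = if a.support ⊆ σ then coeff a p else 0 := by
  induction p using MvPolynomial.induction_on' with
  | monomial b c =>
    rw [restrictFace_monomial]
    split_ifs with hb ha ha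
    · rfl
    · rw [coeff_monomial, if_neg (by rintro rfl; exact ha hb)]
    · rw [coeff_zero, coeff_monomial, if_neg (by rintro rfl; exact hb ha)]
    · exact coeff_zero a
  | add p q hp hq =>
    rw [map_add, coeff_add, hp, hq, coeff_add]
    split_ifs <;> simp

theorem restrictFace_restrictFace_of_subset {σ τ : Finset (Fin m)} (hτσ : τ ⊆ σ)
    (p : MvPolynomial (Fin m) k) :
    restrictFace k τ (restrictFace k σ p) = restrictFace k τ p := by
  ext a
  simp only [coeff_restrictFace]
  split_ifs with hτ hσ <;> first | rfl | exact absurd (hτ.trans hτσ) hσ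

theorem mem_supported_iff_restrictFace_eq_self (σ : Finset (Fin m)) (p : MvPolynomial (Fin m) k) :
    p ∈ supported k (σ : Set (Fin m)) ↔ restrictFace k σ p = p := by
  rw [mem_supported, Finset.coe_subset]
  constructor
  · intro hvars
    ext a
    rw [coeff_restrictFace, ite_eq_left_iff]
    intro ha
    by_contra hp
    have hsupp : a ∈ p.support := mem_support_iff.mpr (Ne.symm hp)
    exact ha ((support_subset_vars_of_mem_support hsupp).trans hvars)
  · intro hp i hi
    obtain ⟨a, ha, hia⟩ := (mem_vars_iff_mem_support i).mp hi
    rw [mem_support_iff, ← hp, coeff_restrictFace] at ha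
    exact (ite_ne_right_iff.mp ha).1 hia

end restrictFace

theorem Finsupp.sum_single_one_le_iff {α : Type*} (S : Finset α) (a : α →₀ ℕ) :
    ∑ i ∈ S, Finsupp.single i 1 ≤ a ↔ S ⊆ a.support := by
  classical
  simp only [Finsupp.le_def, Finsupp.coe_finsetSum, Finset.sum_apply, Finsupp.single_apply,
    Finset.sum_ite_eq', Finset.subset_iff, Finsupp.mem_support_iff]
  refine ⟨fun h i hi => ?_, fun h i => ?_⟩
  · have := h i
    rw [if_pos hi] at this
    omega
  · split_ifs with hi
    · exact Nat.one_le_iff_ne_zero.mpr (h hi)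
    · exact Nat.zero_le _

section PiecewisePolynomials

variable {k : Type*} [CommRing k] {m : ℕ} {K : Set (Finset (Fin m))}

theorem mem_PPhat_iff (g : (σ : K) → MvPolynomial (Fin m) k) :
    g ∈ PPhat k K ↔
      ∀ σ τ : K, (τ : Finset (Fin m)) ⊆ σ → g τ = restrictFace k τ (g σ) := by
  simp only [PPhat, Algebra.mem_inf, Algebra.mem_iInf, Subalgebra.mem_comap,
    AlgHom.mem_equalizer, Pi.evalAlgHom_apply, AlgHom.coe_comp, Function.comp_apply,
    mem_supported_iff_restrictFace_eq_self]
  exact ⟨fun h => h.2, fun h => ⟨fun σ => (h σ σ subset_rfl).symm, h⟩⟩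

theorem alphaMap_apply (p : MvPolynomial (Fin m) k) (σ : K) :
    alphaMap k K p σ = restrictFace k σ p := rfl

theorem alphaMap_mem_PPhat (p : MvPolynomial (Fin m) k) : alphaMap k K p ∈ PPhat k K :=
  (mem_PPhat_iff _).mpr fun _ _ hτσ => (restrictFace_restrictFace_of_subset hτσ p).symm

variable (hK : ∀ σ ∈ K, ∀ τ, τ ⊆ σ → τ ∈ K)
include hK

theorem coeff_apply_of_mem_PPhat {g : (σ : K) → MvPolynomial (Fin m) k} (hg : g ∈ PPhat k K)
    (τ : K) (a : Fin m →₀ ℕ) :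
    coeff a (g τ) =
      if ha : a.support ⊆ τ then coeff a (g ⟨a.support, hK τ τ.2 _ ha⟩) else 0 := by
  have hcompat := (mem_PPhat_iff g).mp hg
  split_ifs with ha
  · rw [hcompat τ ⟨a.support, _⟩ ha, coeff_restrictFace, if_pos subset_rfl]
  · rw [hcompat τ τ subset_rfl, coeff_restrictFace, if_neg ha]

theorem exists_alphaMap_eq {g : (σ : K) → MvPolynomial (Fin m) k} (hg : g ∈ PPhat k K) :
    ∃ p, alphaMap k K p = g := by
  classical
  let c : (Fin m →₀ ℕ) → k := fun a =>
    if ha : a.support ∈ K then coeff a (g ⟨a.support, ha⟩) else 0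
  let S := Finset.univ.biUnion fun σ : K => (g σ).support
  refine ⟨∑ a ∈ S, monomial a (c a), funext fun τ => ?_⟩
  ext a
  simp only [alphaMap_apply, coeff_restrictFace, coeff_sum, coeff_monomial, Finset.sum_ite_eq',
    coeff_apply_of_mem_PPhat hK hg τ a]
  split_ifs with hτ hS
  · exact dif_pos _
  · refine (notMem_support_iff.mp fun ha => hS ?_).symm
    exact Finset.mem_biUnion.mpr ⟨_, Finset.mem_univ _, ha⟩
  · rfl

theorem mem_ker_alphaMap_iff (p : MvPolynomial (Fin m) k) :
    p ∈ RingHom.ker (alphaMap k K) ↔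
      ∀ a : Fin m →₀ ℕ, a.support ∈ K → coeff a p = 0 := by
  simp only [RingHom.mem_ker, funext_iff, alphaMap_apply, Pi.zero_apply,
    MvPolynomial.ext_iff, coeff_restrictFace, coeff_zero, ite_eq_right_iff, Subtype.forall]
  exact ⟨fun h a ha => h _ ha a subset_rfl, fun h σ hσ a ha => h a (hK σ hσ _ ha)⟩

theorem mem_stanleyReisnerIdeal_iff (p : MvPolynomial (Fin m) k) :
    p ∈ stanleyReisnerIdeal k K ↔
      ∀ a : Fin m →₀ ℕ, a.support ∈ K → coeff a p = 0 := by
  have hgen : {p | ∃ S : Finset (Fin m), S ∉ K ∧ p = ∏ i ∈ S, X i} =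
      (fun a => monomial a (1 : k)) '' ((fun S => ∑ i ∈ S, Finsupp.single i 1) '' Kᶜ) := by
    ext p
    simp [X, monomial_sum_one, eq_comm]
  rw [stanleyReisnerIdeal, hgen, mem_ideal_span_monomial_image]
  simp only [Set.exists_mem_image, Set.mem_compl_iff, Finsupp.sum_single_one_le_iff,
    mem_support_iff]
  refine ⟨fun h a ha => by_contra fun hp => ?_,
    fun h a hp => ⟨a.support, fun ha => hp (h a ha), subset_rfl⟩⟩
  obtain ⟨S, hS, hSa⟩ := h a hp
  exact hS (hK _ ha S hSa)

end PiecewisePolynomials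

theorem stanleyReisner_iso_piecewisePolynomials_general
    (k : Type*) [CommRing k] (m : ℕ) (K : Set (Finset (Fin m)))
    (hK : IsSimplicialComplex K) :
    Set.range (alphaMap k K) = (PPhat k K : Set ((σ : K) → MvPolynomial (Fin m) k)) ∧
    RingHom.ker (alphaMap k K) = stanleyReisnerIdeal k K ∧
    Nonempty ((MvPolynomial (Fin m) k ⧸ stanleyReisnerIdeal k K) ≃ₐ[k] PPhat k K) := by
  have hdown := hK.2
  have hrange : Set.range (alphaMap k K) = (PPhat k K : Set _) :=
    (Set.range_subset_iff.mpr alphaMap_mem_PPhat).antisymm fun _ hg => exists_alphaMap_eq hdown hg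
  have hker : RingHom.ker (alphaMap k K) = stanleyReisnerIdeal k K := by
    ext p
    rw [mem_ker_alphaMap_iff hdown, mem_stanleyReisnerIdeal_iff hdown]
  have hrange_subalgebra : (alphaMap k K).range = PPhat k K :=
    SetLike.coe_injective ((AlgHom.coe_range _).trans hrange)
  refine ⟨hrange, hker, ⟨?_⟩⟩
  exact (Ideal.quotientEquivAlgOfEq k hker.symm).trans
    ((Ideal.quotientKerEquivRange (alphaMap k K)).trans
      (Subalgebra.equivOfEq _ _ hrange_subalgebra))

/-- For a simplicial complex `K` on `{1,…,m}` that is pure of rank `n`, the restriction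
map `α : h ↦ (h|_σ)_{σ ∈ K}` is a surjection of `k`-algebras onto `PP[K̂;k]` whose kernel
is exactly the Stanley–Reisner ideal `I_K`; consequently it induces an isomorphism of
`k`-algebras `k[K] = k[x_1,…,x_m]/I_K ≅ PP[K̂;k]`. -/
theorem stanleyReisner_iso_piecewisePolynomials
    (k : Type*) [CommRing k] (m n : ℕ) (K : Set (Finset (Fin m)))
    (hK : IsSimplicialComplex K) (hpure : IsPureOfRank K n) :
    Set.range (alphaMap k K) = (PPhat k K : Set ((σ : K) → MvPolynomial (Fin m) k)) ∧
    RingHom.ker (alphaMap k K) = stanleyReisnerIdeal k K ∧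
    Nonempty ((MvPolynomial (Fin m) k ⧸ stanleyReisnerIdeal k K) ≃ₐ[k] PPhat k K) :=
  stanleyReisner_iso_piecewisePolynomials_general k m K hK
end
end

section
/- There exists an n×m integer matrix Λ with Λ·Φ_k = 0 such that for every tuple (r_1,…,r_k) with 0 ≤ r_j ≤ n_j for each j, the n×n submatrix of Λ obtained by deleting, for every j, the column of index r_j in the j-th column block, has nonzero determinant. (Equivalently: the columns of Λ define a characteristic function λ on the product of simplices Δ^{n_1}×⋯×Δ^{n_k} — the n columns assigned to the facets meeting at any vertex are linearly independent — and Λ·Φ_k = 0 expresses that the kernel of the induced torus homomorphism exp Λ : T^m → T^n contains the image of exp Φ_k : T^k → T^m.) -/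
/-!
Let `V` be block diagonal with `i`-th block the relations `χ^i_{α+1} e_0 - χ^i_0 e_{α+1}`
among the vertices of `Δ^{n_i}`, so that `V` kills the diagonal blocks of `Φ`, and let `U` pick
the coordinate `0` of every block, so that `G = U Φ` is lower triangular with diagonal entries
`χ^j_0 ≠ 0`. Then `Λ = V (det G • 1 - Φ adj(G) U)` satisfies `Λ Φ = 0` because
`adj(G) G = det G • 1`. Since `V Φ` and `adj G` are lower triangular, the correction term only
reaches blocks strictly below the diagonal, so `Λ` is block lower triangular with diagonal blocks
`det G • V_i`. A kernel vector of a vertex minor, extended by zero, thus vanishes block by block: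
`V_i x = 0` means `χ^i_0 x = x_0 χ^i`, and `x_{r_i} = 0` with `χ^i_{r_i} ≠ 0` forces `x = 0`.
-/

open Matrix

/-- The `m × k` integer matrix `Φ_k`, with rows indexed by pairs `⟨i, α⟩`
(the `α`-th row of the `i`-th block) and columns indexed by `Fin k`:
the `i`-th block of the `j`-th column is `χ i` if `j = i`, is `c i ⬝ j` if `j < i`,
and vanishes if `j > i`. -/
def PhiMat (k : ℕ) (n : Fin k → ℕ) (χ : (i : Fin k) → Fin (n i + 1) → ℕ)
    (c : (i : Fin k) → Fin (n i + 1) → Fin k → ℤ) :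
    ((i : Fin k) × Fin (n i + 1)) → Fin k → ℤ :=
  fun q j => if j = q.1 then (χ q.1 q.2 : ℤ) else if j < q.1 then c q.1 q.2 j else 0

section Simplex

variable {R : Type*} [CommRing R] {m : ℕ}

def simplexRelations (w : Fin (m + 1) → R) : Matrix (Fin m) (Fin (m + 1)) R :=
  of fun α => Pi.single 0 (w α.succ) - Pi.single α.succ (w 0)

theorem simplexRelations_mulVec_apply (w x : Fin (m + 1) → R) (α : Fin m) :
    (simplexRelations w *ᵥ x) α = w α.succ * x 0 - w 0 * x α.succ := by
  change (Pi.single 0 (w α.succ) - Pi.single α.succ (w 0)) ⬝ᵥ x = _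
  rw [sub_dotProduct, single_dotProduct, single_dotProduct]

theorem simplexRelations_mulVec_self (w : Fin (m + 1) → R) : simplexRelations w *ᵥ w = 0 := by
  ext α
  rw [simplexRelations_mulVec_apply, Pi.zero_apply, mul_comm, sub_self]

theorem simplexRelations_map {S : Type*} [CommRing S] (f : R →+* S) (w : Fin (m + 1) → R) :
    (simplexRelations w).map f = simplexRelations (f ∘ w) := by
  ext α β
  simp [simplexRelations, Pi.single_apply, apply_ite f]

theorem eq_zero_of_simplexRelations_mulVec_eq_zero [IsDomain R] {w x : Fin (m + 1) → R}
    (hw : ∀ β, w β ≠ 0) (hx : simplexRelations w *ᵥ x = 0) {r : Fin (m + 1)}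
    (hr : x r = 0) : x = 0 := by
  have hprop : ∀ β, w 0 * x β = x 0 * w β := Fin.cases (mul_comm _ _) fun α => by
    have hα := congrFun hx α
    rw [simplexRelations_mulVec_apply, Pi.zero_apply] at hα
    linear_combination -hα
  have hx0 : x 0 = 0 := by simpa [hr, hw r] using (hprop r).symm
  ext β
  simpa [hx0, hw 0] using hprop β

end Simplex

theorem Matrix.BlockTriangular.adjugate {R K α : Type*} [CommRing R] [IsDomain R] [Fintype K]
    [DecidableEq K] [LinearOrder α] {b : K → α} {M : Matrix K K R} (hM : M.BlockTriangular b)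
    (hdet : M.det ≠ 0) : M.adjugate.BlockTriangular b := by
  let f := algebraMap R (FractionRing R)
  have hf : Function.Injective f := IsFractionRing.injective R (FractionRing R)
  have hunit : IsUnit (M.map f).det := by
    rw [show (M.map f).det = f M.det from (f.map_det M).symm]
    exact (map_ne_zero_iff f hf |>.2 hdet).isUnit
  let := invertibleOfIsUnitDet _ hunit
  have hadj : (M.map f).adjugate = (M.map f).det • (M.map f)⁻¹ := by
    rw [← Matrix.mul_one (M.map f).adjugate, ← mul_nonsing_inv _ hunit, ← Matrix.mul_assoc,
      adjugate_mul, smul_mul, Matrix.one_mul]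
  intro i j hij
  apply hf
  refine (congrFun₂ (f.map_adjugate M) i j).trans ?_
  change (M.map f).adjugate i j = f 0
  rw [map_zero, hadj, Matrix.smul_apply, blockTriangular_inv_of_blockTriangular (hM.map f) hij,
    smul_zero]

section Projector

variable {R κ K : Type*} [CommRing R] [Fintype κ] [Fintype K] [DecidableEq κ] [DecidableEq K]

/-- The adjugate form of the projector `1 - Φ (U Φ)⁻¹ U`, which makes sense over any ring. -/
def adjugateProjector (Φ : Matrix κ K R) (U : Matrix K κ R) : Matrix κ κ R :=
  (U * Φ).det • 1 - Φ * (U * Φ).adjugate * U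

theorem adjugateProjector_mul_self (Φ : Matrix κ K R) (U : Matrix K κ R) :
    adjugateProjector Φ U * Φ = 0 := by
  rw [adjugateProjector, Matrix.sub_mul, Matrix.mul_assoc, Matrix.mul_assoc, adjugate_mul,
    smul_mul, Matrix.one_mul, Matrix.mul_smul, Matrix.mul_one, sub_self]

end Projector

theorem Matrix.mul_mul_apply_eq_zero_of_lowerTriangular {R ι κ K : Type*} [Semiring R]
    [Fintype K] [LinearOrder K] {A : Matrix ι K R} {B : Matrix K K R} {C : Matrix K κ R}
    (hB : B.BlockTriangular OrderDual.toDual) {p : ι} {q : κ} {a c : K}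
    (hA : ∀ j, a ≤ j → A p j = 0) (hC : ∀ j, j < c → C j q = 0) (hac : a ≤ c) :
    (A * B * C) p q = 0 := by
  simp only [mul_apply, Finset.sum_mul]
  refine Finset.sum_eq_zero fun j' _ => Finset.sum_eq_zero fun j _ => ?_
  rcases lt_or_ge j' c with hj' | hj'
  · rw [hC j' hj', mul_zero]
  rcases lt_or_ge j a with hj | hj
  · rw [hB (show OrderDual.toDual j' < OrderDual.toDual j from (hj.trans_le (hac.trans hj'))),
      mul_zero, zero_mul]
  · rw [hA j hj, zero_mul, zero_mul]

section BlockMatrices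

variable {R o L : Type*} [Semiring R] {m' n' : o → Type*}

theorem Matrix.blockDiagonal'_mul_apply [DecidableEq o] [Fintype o] [∀ i, Fintype (n' i)]
    (M : ∀ i, Matrix (m' i) (n' i) R) (N : Matrix (Σ i, n' i) L R) (i : o) (α : m' i) (l : L) :
    (blockDiagonal' M * N) ⟨i, α⟩ l = (M i *ᵥ fun β => N ⟨i, β⟩ l) α := by
  rw [mul_apply, Fintype.sum_sigma, Finset.sum_eq_single i
    (fun i' _ h => Finset.sum_eq_zero fun β _ => by
      rw [blockDiagonal'_apply_ne _ _ _ h.symm, zero_mul]) (by simp)]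
  simp only [blockDiagonal'_apply_eq, mulVec, dotProduct]

theorem Matrix.eq_zero_of_mulVec_eq_zero_of_blockLowerTriangular [LinearOrder o]
    [WellFoundedLT o] [Fintype o] [∀ i, Fintype (n' i)] {M : Matrix (Σ i, m' i) (Σ i, n' i) R}
    (hM : ∀ p q, p.1 < q.1 → M p q = 0) (r : ∀ i, n' i)
    (hdiag : ∀ i (x : n' i → R), blockDiag' M i *ᵥ x = 0 → x (r i) = 0 → x = 0)
    {y : (Σ i, n' i) → R} (hMy : M *ᵥ y = 0) (hy : ∀ i, y ⟨i, r i⟩ = 0) : y = 0 := by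
  suffices h : ∀ i, (fun β => y ⟨i, β⟩) = 0 from funext fun q => congrFun (h q.1) q.2
  intro i
  induction i using WellFoundedLT.induction with
  | ind i ih =>
    refine hdiag i _ (funext fun α => ?_) (hy i)
    have hα := congrFun hMy ⟨i, α⟩
    rw [mulVec, dotProduct, Fintype.sum_sigma,
      Finset.sum_eq_single i (fun j _ hji => ?_) (by simp)] at hα
    · exact hα
    · refine Finset.sum_eq_zero fun β _ => ?_
      rcases hji.lt_or_gt with h | h
      · rw [show y ⟨j, β⟩ = 0 from congrFun (ih j h) β, mul_zero]
      · rw [hM _ _ h, zero_mul]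

end BlockMatrices

theorem Matrix.linearIndepOn_cols_of_mulVec_eq_zero {R ι κ : Type*} [CommRing R] [Fintype κ]
    {M : Matrix ι κ R} {s : Set κ}
    (hM : ∀ y, (∀ q ∉ s, y q = 0) → M *ᵥ y = 0 → y = 0) :
    LinearIndepOn R (fun q p => M p q) s := by
  rw [linearIndepOn_iff]
  intro l hl hlM
  refine DFunLike.coe_injective (hM l ((Finsupp.mem_supported' _ _).1 hl) ?_)
  rw [Finsupp.linearCombination_apply, Finsupp.sum_fintype _ _ (by simp)] at hlM
  rw [← hlM]
  ext p
  simp [mulVec, dotProduct, mul_comm]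

section Characteristic

variable {k : ℕ} {n : Fin k → ℕ} (χ : (i : Fin k) → Fin (n i + 1) → ℕ)
  (c : (i : Fin k) → Fin (n i + 1) → Fin k → ℤ)

theorem PhiMat_apply_self (i : Fin k) (β : Fin (n i + 1)) :
    PhiMat k n χ c ⟨i, β⟩ i = χ i β :=
  if_pos rfl

theorem PhiMat_apply_of_lt {i j : Fin k} (h : i < j) (β : Fin (n i + 1)) :
    PhiMat k n χ c ⟨i, β⟩ j = 0 := by
  rw [PhiMat, if_neg h.ne', if_neg h.not_gt]

def vertexRelations : Matrix ((i : Fin k) × Fin (n i)) ((i : Fin k) × Fin (n i + 1)) ℤ :=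
  blockDiagonal' fun i => simplexRelations fun β => (χ i β : ℤ)

theorem vertexRelations_mul_PhiMat_apply_eq_zero {p : (i : Fin k) × Fin (n i)} {j : Fin k}
    (h : p.1 ≤ j) : (vertexRelations χ * of (PhiMat k n χ c)) p j = 0 := by
  obtain ⟨i, α⟩ := p
  rw [vertexRelations, blockDiagonal'_mul_apply]
  rcases h.eq_or_lt with rfl | h
  · simp only [of_apply, PhiMat_apply_self, simplexRelations_mulVec_self, Pi.zero_apply]
  · simp only [of_apply, PhiMat_apply_of_lt _ _ h]
    rw [← Pi.zero_def, mulVec_zero, Pi.zero_apply]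

def basepointSelector (n : Fin k → ℕ) : Matrix (Fin k) ((i : Fin k) × Fin (n i + 1)) ℤ :=
  of fun j => Pi.single ⟨j, 0⟩ 1

theorem basepointSelector_mul_apply {L : Type*} (N : Matrix ((i : Fin k) × Fin (n i + 1)) L ℤ)
    (j : Fin k) (l : L) : (basepointSelector n * N) j l = N ⟨j, 0⟩ l := by
  rw [mul_apply', basepointSelector]
  exact (single_dotProduct _ _ _).trans (one_mul _)

theorem basepointSelector_apply_of_lt {j : Fin k} {q : (i : Fin k) × Fin (n i + 1)}
    (h : j < q.1) : basepointSelector n j q = 0 :=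
  Pi.single_eq_of_ne (fun hq => h.ne (congrArg Sigma.fst hq).symm) _

theorem blockTriangular_basepointSelector_mul_PhiMat :
    (basepointSelector n * of (PhiMat k n χ c)).BlockTriangular OrderDual.toDual := fun _ _ h => by
  rw [basepointSelector_mul_apply, of_apply]
  exact PhiMat_apply_of_lt χ c h _

theorem det_basepointSelector_mul_PhiMat_ne_zero (hχ : ∀ i α, χ i α ≠ 0) :
    (basepointSelector n * of (PhiMat k n χ c)).det ≠ 0 := by
  rw [det_of_isLowerTriangular _ (blockTriangular_basepointSelector_mul_PhiMat χ c)]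
  refine Finset.prod_ne_zero_iff.2 fun j _ => ?_
  rw [basepointSelector_mul_apply, of_apply, PhiMat_apply_self]
  exact_mod_cast hχ j 0

noncomputable def characteristicMatrix :
    Matrix ((i : Fin k) × Fin (n i)) ((i : Fin k) × Fin (n i + 1)) ℤ :=
  vertexRelations χ * adjugateProjector (of (PhiMat k n χ c)) (basepointSelector n)

theorem characteristicMatrix_mul_PhiMat : characteristicMatrix χ c * of (PhiMat k n χ c) = 0 := by
  rw [characteristicMatrix, Matrix.mul_assoc, adjugateProjector_mul_self, Matrix.mul_zero]

theorem characteristicMatrix_apply_of_le (hχ : ∀ i α, χ i α ≠ 0)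
    {p : (i : Fin k) × Fin (n i)} {q : (i : Fin k) × Fin (n i + 1)} (h : p.1 ≤ q.1) :
    characteristicMatrix χ c p q =
      (basepointSelector n * of (PhiMat k n χ c)).det * vertexRelations χ p q := by
  have hadj := (blockTriangular_basepointSelector_mul_PhiMat χ c).adjugate
    (det_basepointSelector_mul_PhiMat_ne_zero χ c hχ)
  rw [characteristicMatrix, adjugateProjector, Matrix.mul_sub, Matrix.mul_smul, Matrix.mul_one,
    ← Matrix.mul_assoc, ← Matrix.mul_assoc, Matrix.sub_apply, Matrix.smul_apply, smul_eq_mul,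
    mul_mul_apply_eq_zero_of_lowerTriangular hadj
      (fun j hj => vertexRelations_mul_PhiMat_apply_eq_zero χ c hj)
      (fun j hj => basepointSelector_apply_of_lt hj) h, sub_zero]

theorem linearIndepOn_characteristicMatrix (hχ : ∀ i α, χ i α ≠ 0)
    (r : (i : Fin k) → Fin (n i + 1)) :
    LinearIndepOn ℚ (fun q p => (characteristicMatrix χ c p q : ℚ)) {q | q.2 ≠ r q.1} := by
  set d := (basepointSelector n * of (PhiMat k n χ c)).det
  have hd : (d : ℚ) ≠ 0 := by exact_mod_cast det_basepointSelector_mul_PhiMat_ne_zero χ c hχ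
  have hdiag (i : Fin k) : blockDiag' ((characteristicMatrix χ c).map (Int.cast : ℤ → ℚ)) i =
      (d : ℚ) • simplexRelations fun β => (χ i β : ℚ) := by
    ext α β
    rw [blockDiag'_apply, map_apply, characteristicMatrix_apply_of_le χ c hχ le_rfl,
      vertexRelations, blockDiagonal'_apply_eq, Matrix.smul_apply, smul_eq_mul, Int.cast_mul]
    have hcast :=
      congrFun₂ (simplexRelations_map (Int.castRingHom ℚ) fun β => (χ i β : ℤ)) α β
    simp only [Function.comp_def, eq_intCast, Int.cast_natCast, map_apply] at hcast
    rw [hcast]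
  refine linearIndepOn_cols_of_mulVec_eq_zero (M := (characteristicMatrix χ c).map Int.cast)
    fun y hy hMy => eq_zero_of_mulVec_eq_zero_of_blockLowerTriangular (fun p q h => ?_) r
      (fun i x hx hxr => ?_) hMy fun i => hy _ fun hi => hi rfl
  · rw [map_apply, characteristicMatrix_apply_of_le χ c hχ h.le, vertexRelations,
      blockDiagonal'_apply_ne _ _ _ h.ne, mul_zero, Int.cast_zero]
  · rw [hdiag, smul_mulVec, smul_eq_zero] at hx
    exact eq_zero_of_simplexRelations_mulVec_eq_zero (fun β => by exact_mod_cast hχ i β)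
      (hx.resolve_left hd) hxr

end Characteristic

theorem exists_characteristic_matrix_of_tower_data_general
    (k : ℕ) (n : Fin k → ℕ)
    (χ : (i : Fin k) → Fin (n i + 1) → ℕ) (hχpos : ∀ i α, 0 < χ i α)
    (c : (i : Fin k) → Fin (n i + 1) → Fin k → ℤ) :
    ∃ Λ : ((i : Fin k) × Fin (n i)) → ((i : Fin k) × Fin (n i + 1)) → ℤ,
      (∀ p : (i : Fin k) × Fin (n i), ∀ j : Fin k,
        ∑ q : (i : Fin k) × Fin (n i + 1), Λ p q * PhiMat k n χ c q j = 0) ∧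
      ∀ r : (i : Fin k) → Fin (n i + 1),
        LinearIndependent ℚ
          (fun q : {q : (i : Fin k) × Fin (n i + 1) // q.2 ≠ r q.1} =>
            (fun p : (i : Fin k) × Fin (n i) => (Λ p ↑q : ℚ))) :=
  have hχ : ∀ i α, χ i α ≠ 0 := fun i α => (hχpos i α).ne'
  ⟨characteristicMatrix χ c, fun p j => congrFun₂ (characteristicMatrix_mul_PhiMat χ c) p j,
    linearIndepOn_characteristicMatrix χ c hχ⟩

/-- There exists an `n × m` integer matrix `Λ` with `Λ · Φ_k = 0` such that for every
choice `r` of one column index in each block, the `n` columns of `Λ` obtained by deleting,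
for every `j`, the column of index `r j` in the `j`-th block are linearly independent
over `ℚ` (equivalently, the corresponding `n × n` submatrix has nonzero determinant);
i.e. the columns of `Λ` define a characteristic function on `Δ^{n_1} × ⋯ × Δ^{n_k}`. -/
theorem exists_characteristic_matrix_of_tower_data
    (k : ℕ) (hk : 1 ≤ k) (n : Fin k → ℕ) (hn : ∀ i, 1 ≤ n i)
    (χ : (i : Fin k) → Fin (n i + 1) → ℕ) (hχpos : ∀ i α, 0 < χ i α)
    (hgcd : ∀ i, Finset.univ.gcd (χ i) = 1)
    (c : (i : Fin k) → Fin (n i + 1) → Fin k → ℤ) :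
    ∃ Λ : ((i : Fin k) × Fin (n i)) → ((i : Fin k) × Fin (n i + 1)) → ℤ,
      (∀ p : (i : Fin k) × Fin (n i), ∀ j : Fin k,
        ∑ q : (i : Fin k) × Fin (n i + 1), Λ p q * PhiMat k n χ c q j = 0) ∧
      ∀ r : (i : Fin k) → Fin (n i + 1),
        LinearIndependent ℚ
          (fun q : {q : (i : Fin k) × Fin (n i + 1) // q.2 ≠ r q.1} =>
            (fun p : (i : Fin k) × Fin (n i) => (Λ p ↑q : ℚ))) :=
  exists_characteristic_matrix_of_tower_data_general k n χ hχpos c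
end

section
/- Every point of Z_k has finite stabilizer under the T^k-action defined from the data (χ^i, c^i_{α,l}); that is, the T^k-action on Z_k is locally free. -/
noncomputable section

/-- The scalar by which `u ∈ T^i` multiplies the coordinate `z^j_α`:
`u_j^{χ^j_α} · ∏_{l<j} u_l^{c^j_{α,l}}`. -/
def torusScalar (n : ℕ → ℕ) (χ : (i : ℕ) → Fin (n i + 1) → ℕ)
    (c : (i : ℕ) → Fin (n i + 1) → ℕ → ℤ) {i : ℕ} (u : Fin i → Circle)
    (j : Fin i) (α : Fin (n j + 1)) : Circle :=
  u j ^ χ (j : ℕ) α * ∏ l : Fin i, if (l : ℕ) < (j : ℕ) then u l ^ c (j : ℕ) α (l : ℕ) else 1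

/-- The action of `T^i` on the ambient space `∏_{j<i} ℂ^{n_j+1}`. -/
def torusAct (n : ℕ → ℕ) (χ : (i : ℕ) → Fin (n i + 1) → ℕ)
    (c : (i : ℕ) → Fin (n i + 1) → ℕ → ℤ) {i : ℕ} (u : Fin i → Circle)
    (z : (j : Fin i) → Fin (n j + 1) → ℂ) : (j : Fin i) → Fin (n j + 1) → ℂ :=
  fun j α => (torusScalar n χ c u j α : ℂ) * z j α

/-- `Z_i = ∏_{j=1}^{i} S^{2n_j+1}`, the product of the unit spheres. -/
def Zset (n : ℕ → ℕ) (i : ℕ) : Set ((j : Fin i) → Fin (n j + 1) → ℂ) :=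
  {z | ∀ j : Fin i, ∑ α, Complex.normSq (z j α) = 1}

lemma circle_pow_eq_finite (m : ℕ) (hm : 0 < m) (a : Circle) :
    {x : Circle | x ^ m = a}.Finite := by
  have hsub : {x : Circle | x ^ m = a} ⊆
      (fun x : Circle => (x : ℂ)) ⁻¹' ↑((Polynomial.nthRoots m (a : ℂ)).toFinset) := by
    intro x hx
    simp only [Set.mem_preimage, Multiset.mem_toFinset, Finset.mem_coe]
    rw [Polynomial.mem_nthRoots hm]
    have h : ((x ^ m : Circle) : ℂ) = (a : ℂ) := congrArg Circle.coeHom hx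
    push_cast at h
    exact h
  exact Set.Finite.subset (Set.Finite.preimage
    (Set.injOn_of_injective Circle.coe_injective)
    ((Polynomial.nthRoots m (a:ℂ)).toFinset.finite_toSet)) hsub

/-- Every point of `Z_k` has finite stabilizer under the `T^k`-action determined by the
data `(χ, c)`; i.e. the `T^k`-action on `Z_k` is locally free. -/
theorem stabilizer_finite_of_torus_action
    (k : ℕ) (hk : 1 ≤ k) (n : ℕ → ℕ) (hn : ∀ i, i < k → 1 ≤ n i)
    (χ : (i : ℕ) → Fin (n i + 1) → ℕ) (hχpos : ∀ i, i < k → ∀ α, 0 < χ i α)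
    (c : (i : ℕ) → Fin (n i + 1) → ℕ → ℤ)
    (z : Zset n k) :
    Set.Finite {u : Fin k → Circle | torusAct n χ c u (z : (j : Fin k) → Fin (n j + 1) → ℂ)
      = (z : (j : Fin k) → Fin (n j + 1) → ℂ)} := by
  classical
  set S := {u : Fin k → Circle | torusAct n χ c u (z : (j : Fin k) → Fin (n j + 1) → ℂ)
      = (z : (j : Fin k) → Fin (n j + 1) → ℂ)} with hSdef
  -- choose a nonzero coordinate in each sphere factor
  have hz : ∀ j : Fin k, ∃ α, (z : (j : Fin k) → Fin (n j + 1) → ℂ) j α ≠ 0 := by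
    intro j
    by_contra h
    push_neg at h
    have h1 := z.2 j
    simp only [Zset, Set.mem_setOf_eq] at h1
    rw [Finset.sum_congr rfl (fun α _ => by rw [h α, Complex.normSq_zero])] at h1
    simp at h1
  choose α hα using hz
  -- the key scalar equation for stabilizer elements
  have hscal : ∀ u ∈ S, ∀ j : Fin k, torusScalar n χ c u j (α j) = 1 := by
    intro u hu j
    have h1 : (torusScalar n χ c u j (α j) : ℂ) * (z : (j : Fin k) → Fin (n j + 1) → ℂ) j (α j)
        = (z : (j : Fin k) → Fin (n j + 1) → ℂ) j (α j) := congrFun (congrFun hu j) (α j)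
    have h2 : (torusScalar n χ c u j (α j) : ℂ) = 1 := by
      have := mul_right_cancel₀ (hα j) (h1.trans (one_mul _).symm)
      exact this
    exact Circle.coe_injective (by simpa using h2)
  -- powers and inverse products
  have hpow : ∀ u ∈ S, ∀ j : Fin k, u j ^ χ (j : ℕ) (α j)
      = (∏ l : Fin k, if (l : ℕ) < (j : ℕ) then u l ^ c (j : ℕ) (α j) (l : ℕ) else 1)⁻¹ := by
    intro u hu j
    have := hscal u hu j
    rw [torusScalar] at this
    exact eq_inv_of_mul_eq_one_left this
  -- the coordinate images are finite, by strong induction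
  have key : ∀ N : ℕ, ∀ j : Fin k, (j : ℕ) < N → ((fun u => u j) '' S).Finite := by
    intro N
    induction N with
    | zero => intro j hj; omega
    | succ N ih =>
      intro j hj
      -- the set of possible inverse-products is finite
      set T : Set (Fin k → Circle) := Set.pi Set.univ (fun l : Fin k =>
        if (l : ℕ) < (j : ℕ) then (fun x : Circle => x ^ c (j : ℕ) (α j) (l : ℕ)) ''
          ((fun u => u l) '' S) else {1}) with hTdef
      have hTfin : T.Finite := by
        apply Set.Finite.pi
        intro l
        by_cases hl : (l : ℕ) < (j : ℕ)
        · simp only [hl, if_true]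
          exact ((ih l (by omega)).image _)
        · simp only [hl, if_false]
          exact Set.finite_singleton 1
      have hGfin : ((fun v : Fin k → Circle => (∏ l, v l)⁻¹) '' T).Finite := hTfin.image _
      set G := (fun v : Fin k → Circle => (∏ l, v l)⁻¹) '' T with hGdef
      -- each u j is an m-th root of an element of G
      have hsub : (fun u => u j) '' S ⊆ ⋃ a ∈ G, {x : Circle | x ^ χ (j : ℕ) (α j) = a} := by
        rintro x ⟨u, hu, rfl⟩
        have hmem : (fun l : Fin k => if (l : ℕ) < (j : ℕ)
            then u l ^ c (j : ℕ) (α j) (l : ℕ) else 1) ∈ T := by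
          intro l _
          by_cases hl : (l : ℕ) < (j : ℕ)
          · simp only [hl, if_true]
            exact ⟨u l, ⟨u, hu, rfl⟩, rfl⟩
          · simp only [hl, if_false]
            rfl
        refine Set.mem_biUnion (⟨_, hmem, rfl⟩ : _ ∈ G) ?_
        exact hpow u hu j
      refine Set.Finite.subset (Set.Finite.biUnion hGfin fun a _ => ?_) hsub
      exact circle_pow_eq_finite _ (hχpos (j : ℕ) j.2 (α j)) a
  have Ffin : ∀ j : Fin k, ((fun u => u j) '' S).Finite := fun j => key k j j.2
  have : S ⊆ Set.pi Set.univ (fun j => (fun u => u j) '' S) := by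
    intro u hu j _
    exact ⟨u, hu, rfl⟩
  exact Set.Finite.subset (Set.Finite.pi Ffin) this
end
end

section
/- Fix 2 ≤ i ≤ k. For every point x ∈ Z_{i−1}, with stabilizer G_x ≤ T^{i−1} and orbit [x] ∈ X_{i−1}, the fiber π_i^{−1}([x]) (with the subspace topology from X_i) is homeomorphic to the orbit space of S^{2n_i+1} under the action of G_x × S^1 in which (g, u) multiplies the coordinate z^i_α by u^{χ^i_α}·∏_{l<i} g_l^{c^i_{α,l}}. In particular, if G_x is trivial (a smooth point) the fiber is the weighted projective space ℂP^{n_i}_{χ^i} = S^{2n_i+1}/S^1 for the weighted circle action u·z = (u^{χ^i_0}z_0,…,u^{χ^i_{n_i}}z_{n_i}), and if G_x is a nontrivial finite group (a singular point) the fiber is the quotient of this weighted projective space by G_x (a fake weighted projective space). -/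
noncomputable section

/-- The orbit equivalence relation of the `T^i`-action on `Z_i`. -/
def orbitRel (n : ℕ → ℕ) (χ : (i : ℕ) → Fin (n i + 1) → ℕ)
    (c : (i : ℕ) → Fin (n i + 1) → ℕ → ℤ) (i : ℕ) :
    Zset n i → Zset n i → Prop :=
  fun z z' => ∃ u : Fin i → Circle,
    torusAct n χ c u (z : (j : Fin i) → Fin (n j + 1) → ℂ)
      = (z' : (j : Fin i) → Fin (n j + 1) → ℂ)

/-- `X_i = Z_i / T^i`, with the quotient topology. -/
abbrev Xsp (n : ℕ → ℕ) (χ : (i : ℕ) → Fin (n i + 1) → ℕ)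
    (c : (i : ℕ) → Fin (n i + 1) → ℕ → ℤ) (i : ℕ) : Type :=
  Quot (orbitRel n χ c i)

/-- The projection `Z_{i+1} → Z_i` forgetting the last sphere coordinate. -/
def projZ (n : ℕ → ℕ) (i : ℕ) (z : Zset n (i + 1)) : Zset n i :=
  ⟨fun j α => (z : (j : Fin (i + 1)) → Fin (n j + 1) → ℂ) ⟨j.1, Nat.lt_succ_of_lt j.2⟩ α,
    fun j => z.2 ⟨j.1, Nat.lt_succ_of_lt j.2⟩⟩

/-- The unit sphere `S^{2d+1} ⊆ ℂ^{d+1}`. -/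
def sphereSet (d : ℕ) : Set (Fin (d + 1) → ℂ) :=
  {w | ∑ α, Complex.normSq (w α) = 1}

/-- The scalar by which `(g, u) ∈ G_x × S^1` multiplies the coordinate `z^i_α` of the
fiber sphere: `u^{χ^i_α} · ∏_{l<i} g_l^{c^i_{α,l}}` (here the fiber sphere is the block
of index `m = i - 1` in the `0`-based indexing). -/
def fiberScalar (n : ℕ → ℕ) (χ : (i : ℕ) → Fin (n i + 1) → ℕ)
    (c : (i : ℕ) → Fin (n i + 1) → ℕ → ℤ) (m : ℕ) (g : Fin m → Circle) (u : Circle)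
    (α : Fin (n m + 1)) : Circle :=
  u ^ χ m α * ∏ l : Fin m, g l ^ c m α (l : ℕ)

/-- The orbit relation on the fiber sphere `S^{2n_i+1}` of the action of `G_x × S^1`,
where `G_x ≤ T^{i-1}` is the stabilizer of `x ∈ Z_{i-1}`. -/
def fiberRel (n : ℕ → ℕ) (χ : (i : ℕ) → Fin (n i + 1) → ℕ)
    (c : (i : ℕ) → Fin (n i + 1) → ℕ → ℤ) (m : ℕ) (x : Zset n m) :
    sphereSet (n m) → sphereSet (n m) → Prop :=
  fun w w' => ∃ g : Fin m → Circle,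
    torusAct n χ c g (x : (j : Fin m) → Fin (n j + 1) → ℂ)
        = (x : (j : Fin m) → Fin (n j + 1) → ℂ) ∧
      ∃ u : Circle, ∀ α, (fiberScalar n χ c m g u α : ℂ) * (w : Fin (n m + 1) → ℂ) α
        = (w' : Fin (n m + 1) → ℂ) α

/-! The map `w ↦ [x, w]` from the last sphere `S^{2n_i+1}` to `X_i` lands in the fiber over `[x]`,
and `[x, w] = [x, w']` exactly when some `u ∈ T^i` carries `(x, w)` to `(x, w')`, i.e. when the
first `i - 1` coordinates of `u` stabilise `x` and `u` moves `w` by the `G_x × S^1`-action. Every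
orbit over `[x]` meets the slice `{x} × S^{2n_i+1}`, so the map descends to a continuous bijection
from `S^{2n_i+1} / (G_x × S^1)` onto the fiber. Its source is compact and `X_i` is Hausdorff, being
the quotient of a compact space by a compact group, so it is a homeomorphism. -/

theorem t2Space_quot_smul_of_compactSpace (G X : Type*) [Group G] [TopologicalSpace G]
    [CompactSpace G] [TopologicalSpace X] [CompactSpace X] [T2Space X] [MulAction G X]
    [ContinuousSMul G X] :
    T2Space (Quot fun x y : X => ∃ g : G, g • x = y) := by
  have : ProperSMul G X := ⟨(continuous_smul.prodMk continuous_snd).isProperMap⟩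
  have hrel : (fun x y : X => ∃ g : G, g • x = y) = (MulAction.orbitRel G X).r := by
    funext x y
    rw [eq_iff_iff, ← MulAction.mem_orbit_iff, MulAction.mem_orbit_symm]
    rfl
  rw [hrel]
  exact t2Space_quotient_mulAction_of_properSMul

theorem isCompact_sphereSet (d : ℕ) : IsCompact (sphereSet d) := by
  have h : sphereSet d =
      WithLp.toLp 2 ⁻¹' Metric.sphere (0 : EuclideanSpace ℂ (Fin (d + 1))) 1 := by
    ext w
    simp [sphereSet, EuclideanSpace.norm_eq, Complex.normSq_eq_norm_sq]
  rw [h]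
  exact (PiLp.homeomorph 2 _).symm.isCompact_preimage.2 (isCompact_sphere 0 1)

instance (d : ℕ) : CompactSpace (sphereSet d) :=
  isCompact_iff_compactSpace.mp (isCompact_sphereSet d)

section

variable {n : ℕ → ℕ} {χ : (i : ℕ) → Fin (n i + 1) → ℕ} {c : (i : ℕ) → Fin (n i + 1) → ℕ → ℤ}

theorem torusScalar_mul {i : ℕ} (u v : Fin i → Circle) (j : Fin i) (α : Fin (n j + 1)) :
    torusScalar n χ c (u * v) j α = torusScalar n χ c u j α * torusScalar n χ c v j α := by
  simp only [torusScalar, ← Finset.prod_filter, Pi.mul_apply, mul_pow, mul_zpow,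
    Finset.prod_mul_distrib]
  exact mul_mul_mul_comm _ _ _ _

theorem torusAct_mul {i : ℕ} (u v : Fin i → Circle) (z : (j : Fin i) → Fin (n j + 1) → ℂ) :
    torusAct n χ c (u * v) z = torusAct n χ c u (torusAct n χ c v z) := by
  funext j α
  simp [torusAct, torusScalar_mul, mul_assoc]

theorem torusAct_one {i : ℕ} (z : (j : Fin i) → Fin (n j + 1) → ℂ) :
    torusAct n χ c 1 z = z := by
  funext j α
  simp [torusAct, torusScalar]

theorem torusAct_mem_Zset {i : ℕ} (u : Fin i → Circle) {z : (j : Fin i) → Fin (n j + 1) → ℂ}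
    (hz : z ∈ Zset n i) : torusAct n χ c u z ∈ Zset n i := by
  simpa [Zset, torusAct, Complex.normSq_mul] using hz

theorem continuous_torusScalar {i : ℕ} (j : Fin i) (α : Fin (n j + 1)) :
    Continuous fun u : Fin i → Circle => torusScalar n χ c u j α := by
  simp only [torusScalar, ← Finset.prod_filter]
  fun_prop

theorem continuous_torusAct {i : ℕ} :
    Continuous fun p : (Fin i → Circle) × ((j : Fin i) → Fin (n j + 1) → ℂ) =>
      torusAct n χ c p.1 p.2 := by
  refine continuous_pi fun j => continuous_pi fun α => ?_
  exact (continuous_subtype_val.comp ((continuous_torusScalar j α).comp continuous_fst)).mul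
    ((continuous_apply α).comp ((continuous_apply j).comp continuous_snd))

theorem orbitRel_equivalence (i : ℕ) : Equivalence (orbitRel n χ c i) where
  refl _ := ⟨1, torusAct_one _⟩
  symm := fun ⟨u, hu⟩ =>
    ⟨u⁻¹, by rw [← hu, ← torusAct_mul, inv_mul_cancel, torusAct_one]⟩
  trans := fun ⟨u, hu⟩ ⟨v, hv⟩ => ⟨v * u, by rw [torusAct_mul, hu, hv]⟩

instance (i : ℕ) : CompactSpace (Zset n i) := by
  have h : Zset n i = Set.univ.pi fun j : Fin i => sphereSet (n j) := by
    ext z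
    simp [Zset, sphereSet]
  rw [← isCompact_iff_compactSpace, h]
  exact isCompact_univ_pi fun j => isCompact_sphereSet (n j)

variable (χ c) in
abbrev torusMulAction (i : ℕ) : MulAction (Fin i → Circle) (Zset n i) where
  smul u z := ⟨torusAct n χ c u z, torusAct_mem_Zset u z.2⟩
  one_smul z := Subtype.ext (torusAct_one z.1)
  mul_smul u v z := Subtype.ext (torusAct_mul u v z.1)

instance (i : ℕ) : T2Space (Xsp n χ c i) := by
  let := torusMulAction χ c i
  have : ContinuousSMul (Fin i → Circle) (Zset n i) :=
    ⟨(continuous_torusAct.comp (continuous_fst.prodMk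
      (continuous_subtype_val.comp continuous_snd))).subtype_mk _⟩
  have hrel : orbitRel n χ c i = fun z z' => ∃ u : Fin i → Circle, u • z = z' := by
    funext z z'
    exact propext (exists_congr fun u => ⟨fun h => Subtype.ext h, congrArg Subtype.val⟩)
  show T2Space (Quot (orbitRel n χ c i))
  rw [hrel]
  exact t2Space_quot_smul_of_compactSpace _ _

variable {m : ℕ}

theorem torusScalar_snoc_castSucc (g : Fin m → Circle) (a : Circle) (j : Fin m)
    (α : Fin (n j + 1)) :
    torusScalar n χ c (Fin.snoc g a) j.castSucc α = torusScalar n χ c g j α := by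
  simp [torusScalar, Fin.prod_univ_castSucc]

theorem torusScalar_snoc_last (g : Fin m → Circle) (a : Circle) (α : Fin (n m + 1)) :
    torusScalar n χ c (Fin.snoc g a) (Fin.last m) α = fiberScalar n χ c m g a α := by
  simp [torusScalar, fiberScalar, Fin.prod_univ_castSucc]

theorem torusAct_snoc (g : Fin m → Circle) (a : Circle)
    (y : (j : Fin m) → Fin (n j + 1) → ℂ) (w : Fin (n m + 1) → ℂ) :
    torusAct n χ c (Fin.snoc g a) (Fin.snoc (α := fun j => Fin (n j + 1) → ℂ) y w) =
      Fin.snoc (α := fun j => Fin (n j + 1) → ℂ) (torusAct n χ c g y)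
        fun α => (fiberScalar n χ c m g a α : ℂ) * w α := by
  funext j α
  induction j using Fin.lastCases with
  | last => simp [torusAct, torusScalar_snoc_last]
  | cast j => simp [torusAct, torusScalar_snoc_castSucc]

variable (n) in
def snocZ (x : Zset n m) (w : sphereSet (n m)) : Zset n (m + 1) :=
  ⟨Fin.snoc (α := fun j => Fin (n j + 1) → ℂ) x.1 w.1, fun j => by
    induction j using Fin.lastCases with
    | last => rw [Fin.snoc_last]; exact w.2
    | cast j => rw [Fin.snoc_castSucc]; exact x.2 j⟩

theorem projZ_snocZ (x : Zset n m) (w : sphereSet (n m)) : projZ n m (snocZ n x w) = x :=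
  Subtype.ext (Fin.init_snoc (α := fun j => Fin (n j + 1) → ℂ) ..)

theorem continuous_snocZ (x : Zset n m) : Continuous (snocZ n x) :=
  (continuous_const.finSnoc (A := fun j => Fin (n j + 1) → ℂ) continuous_subtype_val).subtype_mk
    fun w => (snocZ n x w).2

theorem orbitRel_snocZ_iff (x x' : Zset n m) (w w' : sphereSet (n m)) :
    orbitRel n χ c (m + 1) (snocZ n x w) (snocZ n x' w') ↔
      ∃ g : Fin m → Circle, torusAct n χ c g x = x' ∧
        ∃ a : Circle, ∀ α, (fiberScalar n χ c m g a α : ℂ) * w.1 α = w'.1 α := by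
  constructor
  · rintro ⟨u, hu⟩
    rw [← Fin.snoc_init_self u, snocZ, snocZ, torusAct_snoc, Fin.snoc_inj] at hu
    exact ⟨Fin.init u, hu.1, u (Fin.last m), congrFun hu.2⟩
  · rintro ⟨g, hg, a, ha⟩
    refine ⟨Fin.snoc g a, (torusAct_snoc g a x.1 w.1).trans ?_⟩
    rw [hg]
    exact congrArg _ (funext ha)

theorem exists_orbitRel_snocZ {x : Zset n m} {z : Zset n (m + 1)}
    (h : orbitRel n χ c m (projZ n m z) x) : ∃ w, orbitRel n χ c (m + 1) z (snocZ n x w) := by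
  obtain ⟨g, hg⟩ := h
  have hz : torusAct n χ c (Fin.snoc g 1) z =
      Fin.snoc (α := fun j => Fin (n j + 1) → ℂ) x.1
        (torusAct n χ c (Fin.snoc g 1) z (Fin.last m)) := by
    rw [← Fin.snoc_init_self z.1, torusAct_snoc, Fin.snoc_last]
    exact congrArg (Fin.snoc · _) hg
  exact ⟨⟨_, torusAct_mem_Zset _ z.2 (Fin.last m)⟩, Fin.snoc g 1, hz⟩

variable (χ c) in
def fiberInclusion (x : Zset n m) : Quot (fiberRel n χ c m x) → Xsp n χ c (m + 1) :=
  Quot.lift (fun w => Quot.mk _ (snocZ n x w))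
    fun _ _ h => Quot.sound ((orbitRel_snocZ_iff x x _ _).2 h)

theorem continuous_fiberInclusion (x : Zset n m) : Continuous (fiberInclusion χ c x) :=
  continuous_quot_lift _ (continuous_quot_mk.comp (continuous_snocZ x))

theorem injective_fiberInclusion (x : Zset n m) : Function.Injective (fiberInclusion χ c x) := by
  rintro ⟨w⟩ ⟨w'⟩ h
  exact Quot.sound <| (orbitRel_snocZ_iff x x w w').1 <|
    (orbitRel_equivalence _).quot_mk_eq_iff _ _ |>.1 h

theorem range_fiberInclusion {π : Xsp n χ c (m + 1) → Xsp n χ c m}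
    (hπ : ∀ z, π (Quot.mk _ z) = Quot.mk _ (projZ n m z)) (x : Zset n m) :
    Set.range (fiberInclusion χ c x) = {p | π p = Quot.mk _ x} := by
  ext p
  constructor
  · rintro ⟨⟨w⟩, rfl⟩
    exact (hπ _).trans (congrArg _ (projZ_snocZ x w))
  · intro hp
    induction p using Quot.ind with | mk z => ?_
    rw [Set.mem_ofPred_eq, hπ, (orbitRel_equivalence _).quot_mk_eq_iff] at hp
    obtain ⟨w, hw⟩ := exists_orbitRel_snocZ hp
    exact ⟨Quot.mk _ w, (Quot.sound hw).symm⟩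

end

theorem fiber_homeomorph_orbit_space_general
    (m : ℕ)
    (n : ℕ → ℕ)
    (χ : (i : ℕ) → Fin (n i + 1) → ℕ)
    (c : (i : ℕ) → Fin (n i + 1) → ℕ → ℤ)
    (π : Xsp n χ c (m + 1) → Xsp n χ c m)
    (hπ : ∀ z : Zset n (m + 1),
      π (Quot.mk (orbitRel n χ c (m + 1)) z) = Quot.mk (orbitRel n χ c m) (projZ n m z))
    (x : Zset n m) :
    Nonempty (({p : Xsp n χ c (m + 1) // π p = Quot.mk (orbitRel n χ c m) x}) ≃ₜ
      Quot (fiberRel n χ c m x)) := by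
  have hf := (continuous_fiberInclusion (χ := χ) (c := c) x).isClosedEmbedding
    (injective_fiberInclusion x)
  exact ⟨(hf.isEmbedding.toHomeomorph.trans (.setCongr (range_fiberInclusion hπ x))).symm⟩

/-- Fibers of `π_i : X_i → X_{i-1}` (here `i = m + 1`, `1 ≤ m`): for every `x ∈ Z_{i-1}`
with stabilizer `G_x ≤ T^{i-1}`, the fiber `π_i⁻¹([x])`, with the subspace topology,
is homeomorphic to the orbit space of the sphere `S^{2n_i+1}` under the action of
`G_x × S^1` in which `(g,u)` multiplies `z^i_α` by `u^{χ^i_α} ∏_{l<i} g_l^{c^i_{α,l}}`.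
In particular it is a weighted projective space at smooth points and a fake weighted
projective space at singular points. -/
theorem fiber_homeomorph_orbit_space
    (k m : ℕ) (hm : 1 ≤ m) (hmk : m + 1 ≤ k)
    (n : ℕ → ℕ) (hn : ∀ i, i < k → 1 ≤ n i)
    (χ : (i : ℕ) → Fin (n i + 1) → ℕ) (hχpos : ∀ i, i < k → ∀ α, 0 < χ i α)
    (c : (i : ℕ) → Fin (n i + 1) → ℕ → ℤ)
    (π : Xsp n χ c (m + 1) → Xsp n χ c m)
    (hπ : ∀ z : Zset n (m + 1),
      π (Quot.mk (orbitRel n χ c (m + 1)) z) = Quot.mk (orbitRel n χ c m) (projZ n m z))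
    (x : Zset n m) :
    Nonempty (({p : Xsp n χ c (m + 1) // π p = Quot.mk (orbitRel n χ c m) x}) ≃ₜ
      Quot (fiberRel n χ c m x)) :=
  fiber_homeomorph_orbit_space_general m n χ c π hπ x
end
end

section
/- The quotient ring R/J is isomorphic, as a commutative ring, to ℤ[w_1, w_2]/⟨w_1² − 30·w_2, w_1·w_2, w_2²⟩. (This ring is the integral cohomology ring of the weighted projective space ℂP²_{(2,3,5)}.) -/
noncomputable section

/-- Substitution `(u₁, u₂) ↦ (a, b)` of polynomials in one variable `t`
into an integral polynomial in two variables. -/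
def substAB (a b : Polynomial ℤ) : MvPolynomial (Fin 2) ℤ →ₐ[ℤ] Polynomial ℤ :=
  MvPolynomial.aeval ![a, b]

/-- Triples `(f₁₂, f₁₃, f₂₃)` of integral polynomials in two variables. -/
abbrev PTriple := MvPolynomial (Fin 2) ℤ × MvPolynomial (Fin 2) ℤ × MvPolynomial (Fin 2) ℤ

/-- Projection onto `f₁₂`. -/
def p12 : PTriple →ₐ[ℤ] MvPolynomial (Fin 2) ℤ := AlgHom.fst ℤ _ _
/-- Projection onto `f₁₃`. -/
def p13 : PTriple →ₐ[ℤ] MvPolynomial (Fin 2) ℤ :=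
  (AlgHom.fst ℤ _ _).comp (AlgHom.snd ℤ _ _)
/-- Projection onto `f₂₃`. -/
def p23 : PTriple →ₐ[ℤ] MvPolynomial (Fin 2) ℤ :=
  (AlgHom.snd ℤ _ _).comp (AlgHom.snd ℤ _ _)

/-- The ring `R = PP[Σ]` of integral piecewise polynomials on the fan of `ℂP²_{(2,3,5)}`:
triples `(f₁₂, f₁₃, f₂₃)` with `f₁₂(t,0) = f₁₃(t,0)`, `f₁₂(t,5t) = f₂₃(t,5t)` and
`f₁₃(-t,-3t) = f₂₃(-t,-3t)`, with componentwise operations. -/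
def Rring : Subalgebra ℤ PTriple :=
  AlgHom.equalizer ((substAB Polynomial.X 0).comp p12) ((substAB Polynomial.X 0).comp p13) ⊓
  AlgHom.equalizer ((substAB Polynomial.X (5 * Polynomial.X)).comp p12)
    ((substAB Polynomial.X (5 * Polynomial.X)).comp p23) ⊓
  AlgHom.equalizer ((substAB (-Polynomial.X) (-(3 * Polynomial.X))).comp p13)
    ((substAB (-Polynomial.X) (-(3 * Polynomial.X))).comp p23)

/-- The ideal `J ⊆ R` generated by the global linear elements `(u₁,u₁,u₁)` and `(u₂,u₂,u₂)`. -/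
def Jideal : Ideal Rring :=
  Ideal.span {x : Rring |
    (x : PTriple) = (MvPolynomial.X 0, MvPolynomial.X 0, MvPolynomial.X 0) ∨
    (x : PTriple) = (MvPolynomial.X 1, MvPolynomial.X 1, MvPolynomial.X 1)}

open Polynomial MvPolynomial

abbrev MvP := MvPolynomial (Fin 2) ℤ

@[simp] lemma substAB_X0 (a b : ℤ[X]) : substAB a b (X 0) = a := by
  simp [substAB]

@[simp] lemma substAB_X1 (a b : ℤ[X]) : substAB a b (X 1) = b := by
  simp [substAB]

/-- lift `ℤ[t] → ℤ[u₁,u₂]`, `t ↦ u₁`. -/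
def lift1 : ℤ[X] →ₐ[ℤ] MvP := Polynomial.aeval (X 0)

@[simp] lemma lift1_X : lift1 X = X 0 := by simp [lift1]

lemma substAB_lift1 (a b : ℤ[X]) (e : ℤ[X]) :
    substAB a b (lift1 e) = Polynomial.aeval a e := by
  have : (substAB a b).comp lift1 = Polynomial.aeval a := by
    apply Polynomial.algHom_ext; simp
  exact DFunLike.congr_fun this e

@[simp] lemma aeval_X_poly (e : ℤ[X]) : Polynomial.aeval (X : ℤ[X]) e = e := by
  simp [Polynomial.aeval_def]

lemma cc_substAB (a b : ℤ[X]) (ha : a.coeff 0 = 0) (hb : b.coeff 0 = 0) (d : MvP) :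
    (substAB a b d).coeff 0 = MvPolynomial.constantCoeff d := by
  have : (Polynomial.evalRingHom (0:ℤ)).comp ((substAB a b) : MvP →+* ℤ[X])
      = (MvPolynomial.constantCoeff : MvP →+* ℤ) := by
    apply MvPolynomial.ringHom_ext
    · intro r; simp [substAB]
    · intro i
      fin_cases i <;>
        simp [substAB, ← Polynomial.coeff_zero_eq_eval_zero, ha, hb]
  calc (substAB a b d).coeff 0
      = (Polynomial.evalRingHom (0:ℤ)).comp ((substAB a b) : MvP →+* ℤ[X]) d := by
        simp [Polynomial.coeff_zero_eq_eval_zero]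
    _ = MvPolynomial.constantCoeff d := by rw [this]

local notation "Xt" => (Polynomial.X : Polynomial ℤ)

lemma ker_subst (a b : ℤ[X]) (l g : MvP)
    (h0 : Ideal.Quotient.mk (Ideal.span {g}) (Polynomial.aeval l a)
        = Ideal.Quotient.mk (Ideal.span {g}) (MvPolynomial.X 0))
    (h1 : Ideal.Quotient.mk (Ideal.span {g}) (Polynomial.aeval l b)
        = Ideal.Quotient.mk (Ideal.span {g}) (MvPolynomial.X 1))
    (d : MvP) (hd : substAB a b d = 0) : g ∣ d := by
  set I := Ideal.span {g}
  have key : (Ideal.Quotient.mkₐ ℤ I).comp ((Polynomial.aeval l).comp (substAB a b))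
      = Ideal.Quotient.mkₐ ℤ I := by
    apply MvPolynomial.algHom_ext
    intro i
    fin_cases i <;>
      simp only [Fin.zero_eta, Fin.mk_one, AlgHom.comp_apply, substAB_X0, substAB_X1,
        Ideal.Quotient.mkₐ_eq_mk, Fin.isValue]
    · exact h0
    · exact h1
  have : Ideal.Quotient.mk I d = Ideal.Quotient.mk I 0 := by
    have := DFunLike.congr_fun key d
    simp only [AlgHom.comp_apply, Ideal.Quotient.mkₐ_eq_mk] at this
    rw [← this, hd]; simp
  rw [← Ideal.mem_span_singleton]
  rw [Ideal.Quotient.eq, sub_zero] at this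
  exact this

lemma dvd1 (d : MvP) (hd : substAB Xt 0 d = 0) : (MvPolynomial.X 1 : MvP) ∣ d := by
  apply ker_subst Xt 0 (MvPolynomial.X 0) _ _ _ d hd
  · rw [Polynomial.aeval_X]
  · rw [Ideal.Quotient.eq]; simp [Ideal.mem_span_singleton]

lemma dvd2 (d : MvP) (hd : substAB Xt (5 * Xt) d = 0) :
    (MvPolynomial.X 1 - 5 * MvPolynomial.X 0 : MvP) ∣ d := by
  apply ker_subst Xt (5 * Xt) (MvPolynomial.X 0) _ _ _ d hd
  · simp
  · rw [Ideal.Quotient.eq]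
    exact Ideal.mem_span_singleton.2 ⟨-1, by simp only [map_mul, map_neg, map_ofNat, Polynomial.aeval_X]; ring⟩

lemma dvd3m (d : MvP) (hd : substAB (-Xt) (-(3 * Xt)) d = 0) :
    (MvPolynomial.X 1 - 3 * MvPolynomial.X 0 : MvP) ∣ d := by
  apply ker_subst (-Xt) (-(3 * Xt)) (-MvPolynomial.X 0) _ _ _ d hd
  · simp
  · rw [Ideal.Quotient.eq]
    exact Ideal.mem_span_singleton.2 ⟨-1, by simp only [map_mul, map_neg, map_ofNat, Polynomial.aeval_X]; ring⟩

lemma dvd3p (d : MvP) (hd : substAB Xt (3 * Xt) d = 0) :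
    (MvPolynomial.X 1 - 3 * MvPolynomial.X 0 : MvP) ∣ d := by
  apply ker_subst Xt (3 * Xt) (MvPolynomial.X 0) _ _ _ d hd
  · simp
  · rw [Ideal.Quotient.eq]
    exact Ideal.mem_span_singleton.2 ⟨-1, by simp only [map_mul, map_neg, map_ofNat, Polynomial.aeval_X]; ring⟩

lemma cc_lift1 (e : ℤ[X]) : MvPolynomial.constantCoeff (lift1 e) = e.coeff 0 := by
  have : (MvPolynomial.constantCoeff).comp (lift1.toRingHom : ℤ[X] →+* MvP)
      = Polynomial.evalRingHom 0 := by
    apply Polynomial.ringHom_ext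
    · intro r; simp [lift1]
    · simp [lift1]
  have := RingHom.congr_fun this e
  simpa [Polynomial.coeff_zero_eq_eval_zero] using this

lemma split (d : MvP) (h : MvPolynomial.constantCoeff d = 0) :
    ∃ b, d = MvPolynomial.X 0 * lift1 ((substAB Xt 0 d).divX) + MvPolynomial.X 1 * b := by
  have h1 : substAB Xt 0 (d - lift1 (substAB Xt 0 d)) = 0 := by
    rw [map_sub, substAB_lift1, aeval_X_poly, sub_self]
  obtain ⟨b, hb⟩ := dvd1 _ h1
  have h2 : (substAB Xt 0 d).coeff 0 = 0 := by
    rw [cc_substAB]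
    · exact h
    · simp
    · simp
  refine ⟨b, ?_⟩
  have h3 : lift1 (substAB Xt 0 d) = MvPolynomial.X 0 * lift1 ((substAB Xt 0 d).divX) := by
    conv_lhs => rw [← Polynomial.divX_mul_X_add (substAB Xt 0 d)]
    rw [h2, map_zero, add_zero, map_mul, lift1_X]
    ring
  rw [← h3]
  linear_combination hb

lemma cm1 (a b : ℤ[X]) :
    (a * b).coeff 1 = a.coeff 0 * b.coeff 1 + a.coeff 1 * b.coeff 0 := by
  conv_lhs => rw [← Polynomial.divX_mul_X_add a]
  rw [show (a.divX * Polynomial.X + Polynomial.C (a.coeff 0)) * b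
      = Polynomial.X * (a.divX * b) + Polynomial.C (a.coeff 0) * b from by ring]
  rw [Polynomial.coeff_add, Polynomial.coeff_C_mul,
    show (1:ℕ) = 0 + 1 from rfl, Polynomial.coeff_X_mul,
    Polynomial.mul_coeff_zero, Polynomial.coeff_divX]
  ring

lemma cm2 (a b : ℤ[X]) :
    (a * b).coeff 2 = a.coeff 0 * b.coeff 2 + a.coeff 1 * b.coeff 1 + a.coeff 2 * b.coeff 0 := by
  conv_lhs => rw [← Polynomial.divX_mul_X_add a]
  rw [show (a.divX * Polynomial.X + Polynomial.C (a.coeff 0)) * b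
      = Polynomial.X * (a.divX * b) + Polynomial.C (a.coeff 0) * b from by ring]
  rw [Polynomial.coeff_add, Polynomial.coeff_C_mul,
    show (2:ℕ) = 1 + 1 from rfl, Polynomial.coeff_X_mul, cm1,
    Polynomial.coeff_divX, Polynomial.coeff_divX]
  ring

/-- restriction to the line `u₁ = 0`. -/
def rho1 : MvP →ₐ[ℤ] ℤ[X] := substAB 0 Xt

def D1 (x : PTriple) : MvP := x.2.1 - x.1
def D2 (x : PTriple) : MvP := x.2.2 - x.1

def c0 (x : PTriple) : ℤ := (rho1 x.1).coeff 0
def c1 (x : PTriple) : ℤ := (rho1 (D1 x)).coeff 1 + (rho1 (D2 x)).coeff 1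
def c2 (x : PTriple) : ℤ := 3 * (rho1 (D1 x)).coeff 2 + 2 * (rho1 (D2 x)).coeff 2

lemma D1_add (x y : PTriple) : D1 (x + y) = D1 x + D1 y := by
  simp [D1]; ring
lemma D2_add (x y : PTriple) : D2 (x + y) = D2 x + D2 y := by
  simp [D2]; ring
lemma c0_add (x y : PTriple) : c0 (x + y) = c0 x + c0 y := by
  simp [c0]
lemma c1_add (x y : PTriple) : c1 (x + y) = c1 x + c1 y := by
  simp [c1, D1_add, D2_add]; ring
lemma c2_add (x y : PTriple) : c2 (x + y) = c2 x + c2 y := by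
  simp [c2, D1_add, D2_add]; ring

lemma cond1 {x : PTriple} (hx : x ∈ Rring) : substAB Xt 0 (D1 x) = 0 := by
  unfold Rring at hx
  have h := hx.1.1
  replace h := (AlgHom.mem_equalizer _ _ _).1 h
  simp only [AlgHom.comp_apply] at h
  rw [D1, map_sub]
  rw [show p12 x = x.1 from rfl, show p13 x = x.2.1 from rfl] at h
  rw [h, sub_self]

lemma cond2 {x : PTriple} (hx : x ∈ Rring) : substAB Xt (5 * Xt) (D2 x) = 0 := by
  unfold Rring at hx
  have h := hx.1.2
  replace h := (AlgHom.mem_equalizer _ _ _).1 h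
  simp only [AlgHom.comp_apply] at h
  rw [D2, map_sub]
  rw [show p12 x = x.1 from rfl, show p23 x = x.2.2 from rfl] at h
  rw [h, sub_self]

lemma cond3 {x : PTriple} (hx : x ∈ Rring) :
    substAB (-Xt) (-(3 * Xt)) (D1 x - D2 x) = 0 := by
  unfold Rring at hx
  have h := hx.2
  replace h := (AlgHom.mem_equalizer _ _ _).1 h
  simp only [AlgHom.comp_apply] at h
  rw [show D1 x - D2 x = x.2.1 - x.2.2 from by unfold D1 D2; ring, map_sub]
  rw [show p13 x = x.2.1 from rfl, show p23 x = x.2.2 from rfl] at h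
  rw [h, sub_self]

/-- witness data for a member of `Rring` -/
lemma exists_pqm {x : PTriple} (hx : x ∈ Rring) :
    ∃ p q m : MvP, D1 x = MvPolynomial.X 1 * p ∧
      D2 x = (MvPolynomial.X 1 - 5 * MvPolynomial.X 0) * q ∧
      D1 x - D2 x = (MvPolynomial.X 1 - 3 * MvPolynomial.X 0) * m := by
  obtain ⟨p, hp⟩ := dvd1 _ (cond1 hx)
  obtain ⟨q, hq⟩ := dvd2 _ (cond2 hx)
  obtain ⟨m, hm⟩ := dvd3m _ (cond3 hx)
  exact ⟨p, q, m, hp, hq, hm⟩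

@[simp] lemma rho1_X0 : rho1 (MvPolynomial.X 0) = 0 := by simp [rho1]
@[simp] lemma rho1_X1 : rho1 (MvPolynomial.X 1) = Xt := by simp [rho1]

lemma coeff0_rho1 (d : MvP) : (rho1 d).coeff 0 = MvPolynomial.constantCoeff d := by
  apply cc_substAB <;> simp

/-- basic facts attached to a member of `Rring`. -/
lemma Rfacts {x : PTriple} (hx : x ∈ Rring) :
    (rho1 (D1 x)).coeff 0 = 0 ∧ (rho1 (D2 x)).coeff 0 = 0 ∧
    3 * (rho1 (D1 x)).coeff 1 + 2 * (rho1 (D2 x)).coeff 1 = 0 := by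
  obtain ⟨p, q, m, hp, hq, hm⟩ := exists_pqm hx
  have e1 : rho1 (D1 x) = Xt * rho1 p := by rw [hp, map_mul, rho1_X1]
  have e2 : rho1 (D2 x) = Xt * rho1 q := by
    rw [hq, map_mul, map_sub, map_mul, rho1_X1, rho1_X0]
    push_cast
    ring_nf
  have e3 : rho1 p - rho1 q = rho1 m := by
    have := congrArg rho1 hm
    rw [map_sub, e1, e2, map_mul, map_sub, map_mul, rho1_X1, rho1_X0] at this
    apply mul_left_cancel₀ (Polynomial.X_ne_zero (R := ℤ))
    rw [mul_sub, this]
    push_cast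
    ring
  have e4 : 5 * substAB Xt 0 q + 3 * substAB Xt 0 m = 0 := by
    have := congrArg (substAB Xt 0) hm
    simp only [hq, map_sub, map_mul, map_ofNat, substAB_X1, substAB_X0, cond1 hx] at this
    have h5 : Xt * (5 * substAB Xt 0 q + 3 * substAB Xt 0 m) = 0 := by
      push_cast at this ⊢
      linear_combination this
    rcases mul_eq_zero.1 h5 with h | h
    · exact absurd h (Polynomial.X_ne_zero (R := ℤ))
    · exact h
  have hQ0 : (rho1 q).coeff 0 = (substAB Xt 0 q).coeff 0 := by
    rw [coeff0_rho1, cc_substAB] <;> simp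
  have hM0 : (rho1 m).coeff 0 = (substAB Xt 0 m).coeff 0 := by
    rw [coeff0_rho1, cc_substAB] <;> simp
  have h30 : 5 * (substAB Xt 0 q).coeff 0 + 3 * (substAB Xt 0 m).coeff 0 = 0 := by
    have := congrArg (fun z => Polynomial.coeff z 0) e4
    simpa using this
  have hd1c0 : (rho1 (D1 x)).coeff 0 = 0 := by rw [e1, Polynomial.mul_coeff_zero]; simp
  have hd2c0 : (rho1 (D2 x)).coeff 0 = 0 := by rw [e2, Polynomial.mul_coeff_zero]; simp
  have hd1c1 : (rho1 (D1 x)).coeff 1 = (rho1 p).coeff 0 := by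
    rw [e1, show (1:ℕ) = 0 + 1 from rfl, Polynomial.coeff_X_mul]
  have hd2c1 : (rho1 (D2 x)).coeff 1 = (rho1 q).coeff 0 := by
    rw [e2, show (1:ℕ) = 0 + 1 from rfl, Polynomial.coeff_X_mul]
  have hPQM : (rho1 p).coeff 0 - (rho1 q).coeff 0 = (rho1 m).coeff 0 := by
    rw [← e3, Polynomial.coeff_sub]
  refine ⟨hd1c0, hd2c0, ?_⟩
  rw [hd1c1, hd2c1]
  rw [hQ0, hM0] at hPQM
  rw [hQ0]
  linarith

lemma fst_mul (x y : PTriple) : (x * y).1 = x.1 * y.1 := rfl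

lemma D1_mul (x y : PTriple) : D1 (x * y) = x.1 * D1 y + y.1 * D1 x + D1 x * D1 y := by
  show x.2.1 * y.2.1 - x.1 * y.1 = _
  unfold D1
  ring

lemma D2_mul (x y : PTriple) : D2 (x * y) = x.1 * D2 y + y.1 * D2 x + D2 x * D2 y := by
  show x.2.2 * y.2.2 - x.1 * y.1 = _
  unfold D2
  ring

lemma c0_mul (x y : PTriple) : c0 (x * y) = c0 x * c0 y := by
  unfold c0
  rw [fst_mul, map_mul, Polynomial.mul_coeff_zero]

lemma c1_mul {x y : PTriple} (hx : x ∈ Rring) (hy : y ∈ Rring) :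
    c1 (x * y) = c0 x * c1 y + c0 y * c1 x := by
  obtain ⟨hA0, hA0', _⟩ := Rfacts hx
  obtain ⟨hB0, hB0', _⟩ := Rfacts hy
  unfold c1 c0
  rw [D1_mul, D2_mul, map_add, map_add, map_add, map_add, map_mul, map_mul, map_mul,
    map_mul, map_mul, map_mul, Polynomial.coeff_add, Polynomial.coeff_add,
    Polynomial.coeff_add, Polynomial.coeff_add, cm1, cm1, cm1, cm1, cm1, cm1]
  rw [hA0, hA0', hB0, hB0']
  ring

lemma c2_mul {x y : PTriple} (hx : x ∈ Rring) (hy : y ∈ Rring) :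
    c2 (x * y) = c0 x * c2 y + c0 y * c2 x + 30 * (c1 x * c1 y) := by
  obtain ⟨hA0, hA0', hKx⟩ := Rfacts hx
  obtain ⟨hB0, hB0', hKy⟩ := Rfacts hy
  unfold c2 c0 c1
  rw [D1_mul, D2_mul, map_add, map_add, map_add, map_add, map_mul, map_mul, map_mul,
    map_mul, map_mul, map_mul, Polynomial.coeff_add, Polynomial.coeff_add,
    Polynomial.coeff_add, Polynomial.coeff_add, cm2, cm2, cm2, cm2, cm2, cm2]
  rw [hA0, hA0', hB0, hB0']
  set A1 := (rho1 (D1 x)).coeff 1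
  set A1' := (rho1 (D2 x)).coeff 1
  set B1 := (rho1 (D1 y)).coeff 1
  set B1' := (rho1 (D2 y)).coeff 1
  linear_combination ((rho1 x.1).coeff 1 - 3 * A1 - 6 * A1') * hKy +
    ((rho1 y.1).coeff 1 - 6 * B1 - 8 * B1') * hKx

/-- substitution along `(t, 3t)`. -/
def rhop : MvP →ₐ[ℤ] ℤ[X] := substAB Xt (3 * Xt)

@[simp] lemma rhop_X0 : rhop (MvPolynomial.X 0) = Xt := by simp [rhop]
@[simp] lemma rhop_X1 : rhop (MvPolynomial.X 1) = 3 * Xt := by simp [rhop]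

lemma coeff0_rhop (d : MvP) : (rhop d).coeff 0 = MvPolynomial.constantCoeff d := by
  apply cc_substAB <;> simp

lemma mem_Rring_of (y : PTriple)
    (h1 : substAB Xt 0 (y.2.1 - y.1) = 0)
    (h2 : substAB Xt (5 * Xt) (y.2.2 - y.1) = 0)
    (h3 : substAB (-Xt) (-(3 * Xt)) (y.2.1 - y.2.2) = 0) : y ∈ Rring := by
  rw [map_sub, sub_eq_zero] at h1 h2 h3
  unfold Rring
  exact ⟨⟨h1.symm, h2.symm⟩, h3⟩

lemma rhop_lift1 (e : ℤ[X]) : rhop (lift1 e) = e := by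
  rw [rhop, substAB_lift1, aeval_X_poly]

lemma coeff1_X (P : ℤ[X]) : (Polynomial.X * P).coeff 1 = P.coeff 0 := by
  rw [show (1:ℕ) = 0 + 1 from rfl, Polynomial.coeff_X_mul]

lemma coeff2_XX (P : ℤ[X]) : (Polynomial.X * (Polynomial.X * P)).coeff 2 = P.coeff 0 := by
  rw [show (2:ℕ) = 1 + 1 from rfl, Polynomial.coeff_X_mul, coeff1_X]

lemma core {x : PTriple} (hx : x ∈ Rring)
    (h0 : c0 x = 0) (h1 : c1 x = 0) (h2 : c2 x = 0) :
    ∃ r s : PTriple, r ∈ Rring ∧ s ∈ Rring ∧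
      x.1 = MvPolynomial.X 0 * r.1 + MvPolynomial.X 1 * s.1 ∧
      x.2.1 = MvPolynomial.X 0 * r.2.1 + MvPolynomial.X 1 * s.2.1 ∧
      x.2.2 = MvPolynomial.X 0 * r.2.2 + MvPolynomial.X 1 * s.2.2 := by
  obtain ⟨p, q, m, hp, hq, hm⟩ := exists_pqm hx
  -- the basic evaluation facts
  have e1 : rho1 (D1 x) = Xt * rho1 p := by rw [hp, map_mul, rho1_X1]
  have e2 : rho1 (D2 x) = Xt * rho1 q := by
    rw [hq, map_mul, map_sub, map_mul, rho1_X1, rho1_X0]; ring_nf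
  have e3 : rho1 p - rho1 q = rho1 m := by
    have := congrArg rho1 hm
    rw [map_sub, e1, e2, map_mul, map_sub, map_mul, rho1_X1, rho1_X0] at this
    apply mul_left_cancel₀ (Polynomial.X_ne_zero (R := ℤ))
    rw [mul_sub, this]; ring
  have e4 : 5 * substAB Xt 0 q + 3 * substAB Xt 0 m = 0 := by
    have := congrArg (substAB Xt 0) hm
    simp only [hq, map_sub, map_mul, map_ofNat, substAB_X1, substAB_X0, cond1 hx] at this
    have h5 : Xt * (5 * substAB Xt 0 q + 3 * substAB Xt 0 m) = 0 := by
      linear_combination this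
    rcases mul_eq_zero.1 h5 with h | h
    · exact absurd h (Polynomial.X_ne_zero (R := ℤ))
    · exact h
  -- constant terms vanish
  have hccf : MvPolynomial.constantCoeff x.1 = 0 := by
    rw [← coeff0_rho1]; exact h0
  have hc1' : (rho1 p).coeff 0 + (rho1 q).coeff 0 = 0 := by
    have d1 : (rho1 (D1 x)).coeff 1 = (rho1 p).coeff 0 := by
      rw [e1, show (1:ℕ) = 0 + 1 from rfl, Polynomial.coeff_X_mul]
    have d2 : (rho1 (D2 x)).coeff 1 = (rho1 q).coeff 0 := by
      rw [e2, show (1:ℕ) = 0 + 1 from rfl, Polynomial.coeff_X_mul]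
    rw [← d1, ← d2]; exact h1
  have hPQM : (rho1 p).coeff 0 - (rho1 q).coeff 0 = (rho1 m).coeff 0 := by
    rw [← e3, Polynomial.coeff_sub]
  have hQM : 5 * (rho1 q).coeff 0 + 3 * (rho1 m).coeff 0 = 0 := by
    have h5 : 5 * Polynomial.eval 0 (substAB Xt 0 q) + 3 * Polynomial.eval 0 (substAB Xt 0 m)
        = 0 := by simpa using congrArg (Polynomial.eval 0) e4
    rw [coeff0_rho1, coeff0_rho1, ← cc_substAB Xt 0 (by simp) (by simp) q,
      ← cc_substAB Xt 0 (by simp) (by simp) m, Polynomial.coeff_zero_eq_eval_zero,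
      Polynomial.coeff_zero_eq_eval_zero]
    exact h5
  have hccp : MvPolynomial.constantCoeff p = 0 := by
    rw [← coeff0_rho1]; omega
  have hccq : MvPolynomial.constantCoeff q = 0 := by
    rw [← coeff0_rho1]; omega
  have hccm : MvPolynomial.constantCoeff m = 0 := by
    rw [← coeff0_rho1]; omega
  -- splittings
  obtain ⟨fb, hsf⟩ := split x.1 hccf
  obtain ⟨pb, hsp⟩ := split p hccp
  obtain ⟨qb, hsq⟩ := split q hccq
  obtain ⟨mb, hsm⟩ := split m hccm
  set fa := lift1 ((substAB Xt 0 x.1).divX) with hfa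
  set pa := lift1 ((substAB Xt 0 p).divX) with hpa
  set qa := lift1 ((substAB Xt 0 q).divX) with hqa
  set ma := lift1 ((substAB Xt 0 m).divX) with hma
  -- the c₂ condition in terms of pb, qb
  have hrho1p : rho1 p = Xt * rho1 pb := by
    rw [hsp, map_add, map_mul, map_mul, rho1_X0, rho1_X1]; ring
  have hrho1q : rho1 q = Xt * rho1 qb := by
    rw [hsq, map_add, map_mul, map_mul, rho1_X0, rho1_X1]; ring
  have hc2' : 3 * MvPolynomial.constantCoeff pb + 2 * MvPolynomial.constantCoeff qb = 0 := by
    have d1 : (rho1 (D1 x)).coeff 2 = (rho1 pb).coeff 0 := by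
      rw [e1, hrho1p, coeff2_XX]
    have d2 : (rho1 (D2 x)).coeff 2 = (rho1 qb).coeff 0 := by
      rw [e2, hrho1q, coeff2_XX]
    rw [← coeff0_rho1, ← coeff0_rho1, ← d1, ← d2]
    exact h2
  -- the obstruction polynomial v
  have e0 : MvPolynomial.X 1 * p - (MvPolynomial.X 1 - 5 * MvPolynomial.X 0) * q
      - (MvPolynomial.X 1 - 3 * MvPolynomial.X 0) * m = 0 := by
    linear_combination -hp + hq + hm
  have hUV : MvPolynomial.X 0 *
        (MvPolynomial.X 1 * pa - (MvPolynomial.X 1 - 5 * MvPolynomial.X 0) * qa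
          - (MvPolynomial.X 1 - 3 * MvPolynomial.X 0) * ma) +
      MvPolynomial.X 1 *
        (MvPolynomial.X 1 * pb - (MvPolynomial.X 1 - 5 * MvPolynomial.X 0) * qb
          - (MvPolynomial.X 1 - 3 * MvPolynomial.X 0) * mb) = 0 := by
    linear_combination e0 - MvPolynomial.X 1 * hsp
      + (MvPolynomial.X 1 - 5 * MvPolynomial.X 0) * hsq
      + (MvPolynomial.X 1 - 3 * MvPolynomial.X 0) * hsm
  set U := MvPolynomial.X 1 * pa - (MvPolynomial.X 1 - 5 * MvPolynomial.X 0) * qa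
          - (MvPolynomial.X 1 - 3 * MvPolynomial.X 0) * ma with hU
  set V := MvPolynomial.X 1 * pb - (MvPolynomial.X 1 - 5 * MvPolynomial.X 0) * qb
          - (MvPolynomial.X 1 - 3 * MvPolynomial.X 0) * mb with hV
  have hrupv : rhop U = -3 * rhop V := by
    have := congrArg rhop hUV
    simp only [map_add, map_mul, rhop_X0, rhop_X1, map_zero] at this
    apply mul_left_cancel₀ (Polynomial.X_ne_zero (R := ℤ))
    linear_combination this
  have hrv : rhop V = 3 * Xt * rhop pb + 2 * Xt * rhop qb := by
    rw [hV]
    simp only [map_sub, map_mul, map_ofNat, rhop_X0, rhop_X1]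
    ring
  have hru : rhop U = 3 * Xt * rhop pa + 2 * Xt * rhop qa := by
    rw [hU]
    simp only [map_sub, map_mul, map_ofNat, rhop_X0, rhop_X1]
    ring
  have hv0 : (rhop V).coeff 0 = 0 := by
    rw [hrv]; simp [Polynomial.mul_coeff_zero]
  have hv1 : (rhop V).coeff 1 = 0 := by
    rw [hrv]
    rw [show (3 * Xt * rhop pb + 2 * Xt * rhop qb : ℤ[X])
        = Xt * (3 * rhop pb + 2 * rhop qb) from by ring]
    rw [coeff1_X, Polynomial.coeff_add, Polynomial.mul_coeff_zero, Polynomial.mul_coeff_zero]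
    simp only [coeff0_rhop]
    norm_num
    omega
  obtain ⟨e, he⟩ : Xt ^ 2 ∣ rhop V := by
    rw [Polynomial.X_pow_dvd_iff]
    intro d hd
    interval_cases d
    · exact hv0
    · exact hv1
  -- adjusted splitting parts
  set W := lift1 e with hW
  set pa' := pa + MvPolynomial.X 1 * W with hpa'
  set pb' := pb - MvPolynomial.X 0 * W with hpb'
  set qa' := qa - MvPolynomial.X 1 * W with hqa'
  set qb' := qb + MvPolynomial.X 0 * W with hqb'
  have hrW : rhop W = e := rhop_lift1 e
  have hDr : substAB Xt (3 * Xt) (MvPolynomial.X 1 * pa'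
      - (MvPolynomial.X 1 - 5 * MvPolynomial.X 0) * qa') = 0 := by
    show rhop _ = 0
    rw [hpa', hqa']
    simp only [map_sub, map_add, map_mul, map_ofNat, rhop_X0, rhop_X1, hrW]
    have : (3*Xt) * (rhop pa + (3*Xt) * e) - ((3*Xt) - 5*Xt) * (rhop qa - (3*Xt)*e)
        = rhop U + 3 * Xt^2 * e := by rw [hru]; ring
    rw [this, hrupv, he]
    ring
  have hDs : substAB Xt (3 * Xt) (MvPolynomial.X 1 * pb'
      - (MvPolynomial.X 1 - 5 * MvPolynomial.X 0) * qb') = 0 := by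
    show rhop _ = 0
    rw [hpb', hqb']
    simp only [map_sub, map_add, map_mul, map_ofNat, rhop_X0, rhop_X1, hrW]
    have : (3*Xt) * (rhop pb - Xt * e) - ((3*Xt) - 5*Xt) * (rhop qb + Xt*e)
        = rhop V - Xt^2 * e := by rw [hrv]; ring
    rw [this, he]
    ring
  obtain ⟨wr, hwr⟩ := dvd3p _ hDr
  obtain ⟨ws, hws⟩ := dvd3p _ hDs
  refine ⟨(fa, fa + MvPolynomial.X 1 * pa', fa + (MvPolynomial.X 1 - 5 * MvPolynomial.X 0) * qa'),
    (fb, fb + MvPolynomial.X 1 * pb', fb + (MvPolynomial.X 1 - 5 * MvPolynomial.X 0) * qb'),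
    ?_, ?_, ?_, ?_, ?_⟩
  · apply mem_Rring_of <;> simp only
    · rw [show fa + MvPolynomial.X 1 * pa' - fa = MvPolynomial.X 1 * pa' from by ring]
      rw [map_mul, substAB_X1, zero_mul]
    · rw [show fa + (MvPolynomial.X 1 - 5 * MvPolynomial.X 0) * qa' - fa
          = (MvPolynomial.X 1 - 5 * MvPolynomial.X 0) * qa' from by ring]
      simp only [map_mul, map_sub, map_ofNat, substAB_X1, substAB_X0]
      ring
    · rw [show fa + MvPolynomial.X 1 * pa' - (fa + (MvPolynomial.X 1 - 5 * MvPolynomial.X 0) * qa')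
          = MvPolynomial.X 1 * pa' - (MvPolynomial.X 1 - 5 * MvPolynomial.X 0) * qa' from by ring]
      rw [hwr]
      simp only [map_mul, map_sub, map_neg, map_ofNat, substAB_X1, substAB_X0]
      ring
  · apply mem_Rring_of <;> simp only
    · rw [show fb + MvPolynomial.X 1 * pb' - fb = MvPolynomial.X 1 * pb' from by ring]
      rw [map_mul, substAB_X1, zero_mul]
    · rw [show fb + (MvPolynomial.X 1 - 5 * MvPolynomial.X 0) * qb' - fb
          = (MvPolynomial.X 1 - 5 * MvPolynomial.X 0) * qb' from by ring]
      simp only [map_mul, map_sub, map_ofNat, substAB_X1, substAB_X0]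
      ring
    · rw [show fb + MvPolynomial.X 1 * pb' - (fb + (MvPolynomial.X 1 - 5 * MvPolynomial.X 0) * qb')
          = MvPolynomial.X 1 * pb' - (MvPolynomial.X 1 - 5 * MvPolynomial.X 0) * qb' from by ring]
      rw [hws]
      simp only [map_mul, map_sub, map_neg, map_ofNat, substAB_X1, substAB_X0]
      ring
  · exact hsf
  · have hD1 : x.2.1 - x.1 = MvPolynomial.X 1 * p := hp
    rw [hpa', hpb']
    linear_combination hD1 + hsf + MvPolynomial.X 1 * hsp
  · have hD2 : x.2.2 - x.1 = (MvPolynomial.X 1 - 5 * MvPolynomial.X 0) * q := hq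
    rw [hqa', hqb']
    linear_combination hD2 + hsf + (MvPolynomial.X 1 - 5 * MvPolynomial.X 0) * hsq

def u1T : PTriple := (MvPolynomial.X 0, MvPolynomial.X 0, MvPolynomial.X 0)
def u2T : PTriple := (MvPolynomial.X 1, MvPolynomial.X 1, MvPolynomial.X 1)
def tauT : PTriple := (2 * MvPolynomial.X 1, 0,
  -(15 * MvPolynomial.X 0) + 5 * MvPolynomial.X 1)
def omT : PTriple := (0, MvPolynomial.X 1 ^ 2 - MvPolynomial.X 0 * MvPolynomial.X 1,
  5 * MvPolynomial.X 0 * MvPolynomial.X 1 - MvPolynomial.X 1 ^ 2)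

lemma u1T_mem : u1T ∈ Rring := by
  apply mem_Rring_of <;> simp [u1T]
lemma u2T_mem : u2T ∈ Rring := by
  apply mem_Rring_of <;> simp [u2T]
lemma tauT_mem : tauT ∈ Rring := by
  apply mem_Rring_of <;>
    · simp only [tauT, map_sub, map_add, map_mul, map_neg, map_ofNat, map_zero,
        substAB_X0, substAB_X1]
      ring
lemma omT_mem : omT ∈ Rring := by
  apply mem_Rring_of <;>
    · simp only [omT, map_sub, map_add, map_mul, map_neg, map_pow, map_ofNat, map_zero,
        substAB_X0, substAB_X1]
      ring

lemma c_u1T : c0 u1T = 0 ∧ c1 u1T = 0 ∧ c2 u1T = 0 := by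
  refine ⟨?_, ?_, ?_⟩ <;>
    simp [c0, c1, c2, D1, D2, u1T]
lemma c_u2T : c0 u2T = 0 ∧ c1 u2T = 0 ∧ c2 u2T = 0 := by
  refine ⟨?_, ?_, ?_⟩ <;>
    simp [c0, c1, c2, D1, D2, u2T, Polynomial.coeff_X]
lemma c_one : c0 (1 : PTriple) = 1 ∧ c1 (1 : PTriple) = 0 ∧ c2 (1 : PTriple) = 0 := by
  refine ⟨?_, ?_, ?_⟩ <;>
    simp [c0, c1, c2, D1, D2]
lemma c_tauT : c0 tauT = 0 ∧ c1 tauT = 1 ∧ c2 tauT = 0 := by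
  refine ⟨?_, ?_, ?_⟩ <;>
    · simp only [c0, c1, c2, D1, D2, tauT, map_sub, map_add, map_mul, map_neg, map_ofNat,
        map_zero, rho1_X0, rho1_X1, Polynomial.coeff_sub, Polynomial.coeff_add,
        Polynomial.coeff_neg]
      norm_num [Polynomial.coeff_X, Polynomial.coeff_ofNat_mul]
lemma c_omT : c0 omT = 0 ∧ c1 omT = 0 ∧ c2 omT = 1 := by
  refine ⟨?_, ?_, ?_⟩ <;>
    · simp only [c0, c1, c2, D1, D2, omT, map_sub, map_add, map_mul, map_neg, map_pow,
        map_ofNat, map_zero, rho1_X0, rho1_X1, Polynomial.coeff_sub, Polynomial.coeff_add,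
        Polynomial.coeff_neg]
      norm_num [Polynomial.coeff_X, Polynomial.coeff_X_pow, Polynomial.coeff_ofNat_mul]

def IdealT : Ideal MvP :=
  Ideal.span ({MvPolynomial.X 0 ^ 2 - 30 * MvPolynomial.X 1,
    MvPolynomial.X 0 * MvPolynomial.X 1, MvPolynomial.X 1 ^ 2} : Set MvP)

def linP (x : PTriple) : MvP :=
  MvPolynomial.C (c0 x) + MvPolynomial.C (c1 x) * MvPolynomial.X 0 +
    MvPolynomial.C (c2 x) * MvPolynomial.X 1

lemma lin_inj {a b c : ℤ}
    (h : (MvPolynomial.C a + MvPolynomial.C b * MvPolynomial.X 0 +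
      MvPolynomial.C c * MvPolynomial.X 1 : MvP) ∈ IdealT) :
    a = 0 ∧ b = 0 ∧ c = 0 := by
  set psi := substAB (30 * Xt) (30 * Xt ^ 2) with hpsi
  have hmap : Ideal.map (psi : MvP →+* ℤ[X]) IdealT ≤ Ideal.span {Xt ^ 3} := by
    rw [IdealT, Ideal.map_span, Ideal.span_le]
    rintro w ⟨g, hg, rfl⟩
    rcases hg with h' | h' | h' <;> rw [h'] <;>
      refine Ideal.mem_span_singleton.2 ?_
    · refine ⟨0, ?_⟩
      simp only [RingHom.coe_coe, hpsi, map_sub, map_mul, map_pow, map_ofNat, substAB_X0, substAB_X1]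
      ring
    · refine ⟨900, ?_⟩
      simp only [RingHom.coe_coe, hpsi, map_mul, substAB_X0, substAB_X1]
      push_cast
      ring
    · rcases h' with rfl
      refine ⟨900 * Xt, ?_⟩
      simp only [RingHom.coe_coe, hpsi, map_pow, substAB_X1]
      push_cast
      ring
  have hin : psi (MvPolynomial.C a + MvPolynomial.C b * MvPolynomial.X 0 +
      MvPolynomial.C c * MvPolynomial.X 1) ∈ Ideal.span {Xt ^ 3} :=
    hmap (Ideal.mem_map_of_mem (psi : MvP →+* ℤ[X]) h)
  have hval : psi (MvPolynomial.C a + MvPolynomial.C b * MvPolynomial.X 0 +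
      MvPolynomial.C c * MvPolynomial.X 1)
      = Polynomial.C a + Polynomial.C (30 * b) * Xt + Polynomial.C (30 * c) * Xt ^ 2 := by
    simp only [hpsi, map_add, map_mul, substAB_X0, substAB_X1, substAB]
    simp [MvPolynomial.aeval_C]
    push_cast
    ring
  rw [hval, Ideal.mem_span_singleton] at hin
  rw [Polynomial.X_pow_dvd_iff] at hin
  have h0 := hin 0 (by norm_num)
  have h1 := hin 1 (by norm_num)
  have h2 := hin 2 (by norm_num)
  simp only [Polynomial.coeff_add, Polynomial.coeff_C_mul, Polynomial.coeff_C,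
    Polynomial.coeff_X_zero, Polynomial.coeff_X_one, Polynomial.coeff_X, Polynomial.coeff_X_pow] at h0 h1 h2
  norm_num at h0 h1 h2
  exact ⟨h0, h1, h2⟩

lemma linP_zero : linP 0 = 0 := by
  simp [linP, c0, c1, c2, D1, D2]

def Phi : Rring →+* (MvP ⧸ IdealT) where
  toFun x := Ideal.Quotient.mk IdealT (linP (x : PTriple))
  map_one' := by
    show Ideal.Quotient.mk IdealT (linP (1 : PTriple)) = 1
    rw [show linP 1 = 1 from by
      simp [linP, c_one.1, c_one.2.1, c_one.2.2]]
    simp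
  map_mul' x y := by
    show Ideal.Quotient.mk IdealT (linP ((x : PTriple) * (y : PTriple)))
      = Ideal.Quotient.mk IdealT (linP x) * Ideal.Quotient.mk IdealT (linP y)
    rw [← map_mul, Ideal.Quotient.eq]
    rw [linP, c0_mul, c1_mul x.2 y.2, c2_mul x.2 y.2]
    have expand : MvPolynomial.C (c0 (x:PTriple) * c0 (y:PTriple)) +
        MvPolynomial.C (c0 (x:PTriple) * c1 (y:PTriple) + c0 (y:PTriple) * c1 (x:PTriple)) * MvPolynomial.X 0 +
        MvPolynomial.C (c0 (x:PTriple) * c2 (y:PTriple) + c0 (y:PTriple) * c2 (x:PTriple) +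
          30 * (c1 (x:PTriple) * c1 (y:PTriple))) * MvPolynomial.X 1
        - linP (x:PTriple) * linP (y:PTriple)
        = MvPolynomial.C (-(c1 (x:PTriple) * c1 (y:PTriple))) *
            (MvPolynomial.X 0 ^ 2 - 30 * MvPolynomial.X 1)
          + MvPolynomial.C (-(c1 (x:PTriple) * c2 (y:PTriple) + c2 (x:PTriple) * c1 (y:PTriple))) *
            (MvPolynomial.X 0 * MvPolynomial.X 1)
          + MvPolynomial.C (-(c2 (x:PTriple) * c2 (y:PTriple))) *
            (MvPolynomial.X 1 ^ 2) := by
      simp only [linP, map_add, map_mul, map_neg, map_ofNat]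
      push_cast
      ring
    rw [expand]
    have hg1 : (MvPolynomial.X 0 ^ 2 - 30 * MvPolynomial.X 1 : MvP) ∈ IdealT :=
      Ideal.subset_span (by left; rfl)
    have hg2 : (MvPolynomial.X 0 * MvPolynomial.X 1 : MvP) ∈ IdealT :=
      Ideal.subset_span (by right; left; rfl)
    have hg3 : (MvPolynomial.X 1 ^ 2 : MvP) ∈ IdealT :=
      Ideal.subset_span (by right; right; rfl)
    exact Ideal.add_mem _ (Ideal.add_mem _ (Ideal.mul_mem_left _ _ hg1)
      (Ideal.mul_mem_left _ _ hg2)) (Ideal.mul_mem_left _ _ hg3)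
  map_zero' := by
    show Ideal.Quotient.mk IdealT (linP (0 : PTriple)) = 0
    rw [linP_zero, map_zero]
  map_add' x y := by
    show Ideal.Quotient.mk IdealT (linP ((x : PTriple) + (y : PTriple)))
      = Ideal.Quotient.mk IdealT (linP x) + Ideal.Quotient.mk IdealT (linP y)
    rw [show linP ((x : PTriple) + (y : PTriple)) = linP x + linP y from by
      simp only [linP, c0_add, c1_add, c2_add, map_add]; ring]
    rw [map_add]

def tauR : Rring := ⟨tauT, tauT_mem⟩
def omR : Rring := ⟨omT, omT_mem⟩
def u1R : Rring := ⟨u1T, u1T_mem⟩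
def u2R : Rring := ⟨u2T, u2T_mem⟩

lemma Phi_tau : Phi tauR = Ideal.Quotient.mk IdealT (MvPolynomial.X 0) := by
  show Ideal.Quotient.mk IdealT (linP tauT) = _
  rw [show linP tauT = MvPolynomial.X 0 from by
    simp [linP, c_tauT.1, c_tauT.2.1, c_tauT.2.2]]

lemma Phi_om : Phi omR = Ideal.Quotient.mk IdealT (MvPolynomial.X 1) := by
  show Ideal.Quotient.mk IdealT (linP omT) = _
  rw [show linP omT = MvPolynomial.X 1 from by
    simp [linP, c_omT.1, c_omT.2.1, c_omT.2.2]]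

lemma Phi_surj : Function.Surjective Phi := by
  intro t
  obtain ⟨F, rfl⟩ := Ideal.Quotient.mk_surjective t
  refine ⟨MvPolynomial.aeval ![tauR, omR] F, ?_⟩
  have key : Phi.comp ((MvPolynomial.aeval ![tauR, omR] : MvP →ₐ[ℤ] Rring) : MvP →+* Rring)
      = Ideal.Quotient.mk IdealT := by
    apply MvPolynomial.ringHom_ext
    · intro r
      simp only [RingHom.coe_comp, RingHom.coe_coe, Function.comp_apply, MvPolynomial.aeval_C]
      rw [show (algebraMap ℤ Rring) r = ((r : ℤ) : Rring) from rfl]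
      rw [map_intCast]
      rw [show (MvPolynomial.C r : MvP) = ((r : ℤ) : MvP) from by simp]
      rw [map_intCast]
    · intro i
      fin_cases i <;>
        simp only [Fin.zero_eta, Fin.mk_one, RingHom.coe_comp, RingHom.coe_coe,
          Function.comp_apply, MvPolynomial.aeval_X, Fin.isValue,
          Matrix.cons_val_zero, Matrix.cons_val_one, Matrix.head_cons]
      · exact Phi_tau
      · exact Phi_om
  exact RingHom.congr_fun key F

lemma ker_Phi : RingHom.ker Phi = Jideal := by
  apply le_antisymm
  · intro x hx
    rw [RingHom.mem_ker] at hx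
    have hlin : linP (x : PTriple) ∈ IdealT := by
      rwa [← Ideal.Quotient.eq_zero_iff_mem]
    obtain ⟨ha, hb, hc⟩ := lin_inj hlin
    obtain ⟨r, s, hr, hs, e1, e2, e3⟩ := core x.2 ha hb hc
    have hxeq : x = u1R * ⟨r, hr⟩ + u2R * ⟨s, hs⟩ := by
      apply Subtype.ext
      show (x : PTriple) = u1T * r + u2T * s
      have : (u1T * r + u2T * s : PTriple)
          = (MvPolynomial.X 0 * r.1 + MvPolynomial.X 1 * s.1,
             MvPolynomial.X 0 * r.2.1 + MvPolynomial.X 1 * s.2.1,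
             MvPolynomial.X 0 * r.2.2 + MvPolynomial.X 1 * s.2.2) := rfl
      rw [this]
      exact Prod.ext e1 (Prod.ext e2 e3)
    rw [hxeq]
    apply Ideal.add_mem
    · exact Ideal.mul_mem_right _ _ (Ideal.subset_span (Or.inl rfl))
    · exact Ideal.mul_mem_right _ _ (Ideal.subset_span (Or.inr rfl))
  · rw [Jideal, Ideal.span_le]
    rintro z (hz | hz) <;>
      · rw [SetLike.mem_coe, RingHom.mem_ker]
        show Ideal.Quotient.mk IdealT (linP (z : PTriple)) = 0
        rw [hz]
        first
          | rw [show ((MvPolynomial.X 0, MvPolynomial.X 0, MvPolynomial.X 0) : PTriple)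
                  = u1T from rfl,
              show linP u1T = 0 from by
                simp [linP, c_u1T.1, c_u1T.2.1, c_u1T.2.2], map_zero]
          | rw [show ((MvPolynomial.X 1, MvPolynomial.X 1, MvPolynomial.X 1) : PTriple)
                  = u2T from rfl,
              show linP u2T = 0 from by
                simp [linP, c_u2T.1, c_u2T.2.1, c_u2T.2.2], map_zero]


/-- `R/J` is isomorphic, as a commutative ring, to
`ℤ[w₁,w₂]/⟨w₁² − 30·w₂, w₁·w₂, w₂²⟩`, the integral cohomology ring of `ℂP²_{(2,3,5)}`. -/
theorem cohomology_ring_of_wCP2_235 :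
    Nonempty ((Rring ⧸ Jideal) ≃+*
      (MvPolynomial (Fin 2) ℤ ⧸
        Ideal.span ({MvPolynomial.X 0 ^ 2 - 30 * MvPolynomial.X 1,
          MvPolynomial.X 0 * MvPolynomial.X 1, MvPolynomial.X 1 ^ 2} :
          Set (MvPolynomial (Fin 2) ℤ)))) := by
  exact ⟨(Ideal.quotEquivOfEq ker_Phi.symm).trans
    (RingHom.quotientKerEquivOfSurjective Phi_surj)⟩
end
end
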